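/- arXiv:2310.02604 — 7 statements merged into one kernel-verified Lean document; each statement's English description precedes it below -/
import Mathlib

section
/- Consider the periodic game with period 2 given by the 1×2 payoff matrices A_t = [1, −1] for t odd and A_t = [−1, 1] for t even, with x_t ∈ ℝ and y_t ∈ ℝ². For every step size η > 0 there exist initial conditions (x_0, y_0, x_{−1}, y_{−1}) ∈ ℝ × ℝ² × ℝ × ℝ², a constant c > 0 and a real number λ > 1 such that the OGDA iterates satisfy sup_{s ∈ {1,...,t}} ( ‖A_iᵀ x_s‖₂ + ‖A_i y_s‖₂ ) ≥ c·λ^t for all t ≥ 1 and for both i ∈ {1, 2} (where A_1 = [1,−1] and A_2 = [−1,1]). -/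
open Matrix Filter

/-- Euclidean norm of a real vector. -/
noncomputable def vnorm2 {ι : Type*} [Fintype ι] (v : ι → ℝ) : ℝ :=
  Real.sqrt (∑ i, v i ^ 2)

/-- The OGDA iterative matrix
`M_OGDA(A, A') = [[I, −2ηA, 0, ηA'], [2ηAᵀ, I, −ηA'ᵀ, 0], [I, 0, 0, 0], [0, I, 0, 0]]`. -/
noncomputable def MOGDA {n m : ℕ} (η : ℝ) (A A' : Matrix (Fin n) (Fin m) ℝ) :
    Matrix ((Fin n ⊕ Fin m) ⊕ (Fin n ⊕ Fin m)) ((Fin n ⊕ Fin m) ⊕ (Fin n ⊕ Fin m)) ℝ :=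
  fromBlocks
    (fromBlocks 1 ((-(2 * η)) • A) ((2 * η) • Aᵀ) 1)
    (fromBlocks 0 (η • A') ((-η) • A'ᵀ) 0)
    1 0

/-- `A₁ = [1, −1]`. -/
noncomputable def A1 : Matrix (Fin 1) (Fin 2) ℝ := !![1, -1]

/-- `A₂ = [−1, 1]`. -/
noncomputable def A2 : Matrix (Fin 1) (Fin 2) ℝ := !![-1, 1]

/-- Period-2 game: `A_t = A₁` for odd `t`, `A_t = A₂` for even `t`. -/
noncomputable def Aper (t : ℕ) : Matrix (Fin 1) (Fin 2) ℝ := if t % 2 = 1 then A1 else A2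

/-- `Δ_i` for state `Z = (x_t, y_t, x_{t-1}, y_{t-1})`:
`‖Bᵀ x_t‖₂ + ‖B y_t‖₂`. -/
noncomputable def Delta (B : Matrix (Fin 1) (Fin 2) ℝ)
    (Z : ((Fin 1 ⊕ Fin 2) ⊕ (Fin 1 ⊕ Fin 2)) → ℝ) : ℝ :=
  vnorm2 (Bᵀ.mulVec fun j => Z (Sum.inl (Sum.inl j))) +
    vnorm2 (B.mulVec fun j => Z (Sum.inl (Sum.inr j)))

/-- Auxiliary explicit trajectory. -/
noncomputable def traj (a b lam : ℝ) (t : ℕ) : ((Fin 1 ⊕ Fin 2) ⊕ (Fin 1 ⊕ Fin 2)) → ℝ :=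
  Sum.elim
    (Sum.elim (fun _ => -((-1:ℝ)^t) * (a * lam^(t+1)))
              (fun j => (if j = 0 then (1:ℝ) else -1) * (b/2 * lam^(t+1))))
    (Sum.elim (fun _ => ((-1:ℝ)^t) * (a * lam^t))
              (fun j => (if j = 0 then (1:ℝ) else -1) * (b/2 * lam^t)))

/-- In the period-2 game `A₁ = [1,−1]` (odd rounds), `A₂ = [−1,1]` (even rounds), for every
step size `η > 0` there are initial conditions (encoded in `Z 0`), a constant `c > 0` and
`λ > 1` such that the OGDA iterates `Z_{t+1} = M_OGDA(A_t, A_{t−1}) Z_t` satisfy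
`sup_{s ∈ {1,…,t}} Δ_{i,s} ≥ c·λ^t` for all `t ≥ 1` and both `i ∈ {1,2}`.
(Note `A_{t−1}` has the parity of `t+1`, so `A_{t-1} = Aper (t+1)`.) -/
theorem stmt1 (η : ℝ) (hη : 0 < η) :
    ∃ Z : ℕ → (((Fin 1 ⊕ Fin 2) ⊕ (Fin 1 ⊕ Fin 2)) → ℝ),
      (∀ t, Z (t + 1) = (MOGDA η (Aper t) (Aper (t + 1))).mulVec (Z t)) ∧
      ∃ c > (0 : ℝ), ∃ lam : ℝ, 1 < lam ∧
        ∀ (t : ℕ) (ht : 1 ≤ t),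
          c * lam ^ t ≤
              (Finset.Icc 1 t).sup' (Finset.nonempty_Icc.mpr ht) (fun s => Delta A1 (Z s)) ∧
          c * lam ^ t ≤
              (Finset.Icc 1 t).sup' (Finset.nonempty_Icc.mpr ht) (fun s => Delta A2 (Z s)) := by
  -- the eigenvalue
  have hDnn : (0:ℝ) ≤ (1 + 8*η^2)^2 - 8*η^2 := by nlinarith [sq_nonneg η, sq_nonneg (η^2)]
  set D : ℝ := Real.sqrt ((1 + 8*η^2)^2 - 8*η^2) with hDdef
  have hDsq : D^2 = (1 + 8*η^2)^2 - 8*η^2 := Real.sq_sqrt hDnn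
  have hDnn' : 0 ≤ D := Real.sqrt_nonneg _
  set L : ℝ := ((1 + 8*η^2) + D)/2 with hLdef
  have hL1 : 1 < L := by nlinarith [sq_nonneg η, mul_pos hη hη]
  have hchar : L^2 - (1 + 8*η^2)*L + 2*η^2 = 0 := by
    rw [hLdef]; nlinarith [hDsq]
  set lam : ℝ := Real.sqrt L with hlamdef
  have hlam1 : 1 < lam := by
    rw [hlamdef, show (1:ℝ) = Real.sqrt 1 by simp]
    exact Real.sqrt_lt_sqrt (by norm_num) hL1
  have hlampos : 0 < lam := lt_trans one_pos hlam1
  have hlamsq : lam^2 = L := Real.sq_sqrt (by linarith)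
  have hcharlam : lam^4 - (1 + 8*η^2)*lam^2 + 2*η^2 = 0 := by
    have h4 : lam^4 = L^2 := by rw [show lam^4 = (lam^2)^2 by ring, hlamsq]
    rw [h4, hlamsq]; exact hchar
  set a : ℝ := lam^2 - lam with hadef
  set b : ℝ := 2*η*(2*lam - 1) with hbdef
  have ha : 0 < a := by rw [hadef]; nlinarith
  have hb : 0 < b := by rw [hbdef]; nlinarith
  have E1 : a*(lam^2 + lam) = η*b*(2*lam + 1) := by
    rw [hadef, hbdef]; linear_combination hcharlam
  have E2 : b*(lam^2 - lam) = 2*η*a*(2*lam - 1) := by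
    rw [hadef, hbdef]; ring
  -- the trajectory
  refine ⟨traj a b lam, ?_, ?_⟩
  · intro t
    funext i
    rcases Nat.even_or_odd t with hpar | hpar
    · have h1 : Aper t = A2 := by
        simp [Aper, Nat.even_iff.mp hpar]
      have h2 : Aper (t+1) = A1 := by
        have h : (t+1) % 2 = 1 := by
          have := Nat.even_iff.mp hpar; omega
        simp [Aper, h]
      have hw : ((-1:ℝ))^t = 1 := hpar.neg_one_pow
      have hw' : ((-1:ℝ))^(t+1) = -1 := by rw [pow_succ, hw]; ring
      obtain (⟨j⟩|⟨j⟩)|(⟨j⟩|⟨j⟩) := i <;>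
        simp [traj, MOGDA, h1, h2, A1, A2, Matrix.mulVec, Matrix.fromBlocks, dotProduct,
          Fintype.sum_sum_type, Fin.sum_univ_one, Fin.sum_univ_two, Matrix.one_apply,
          hw, hw'] <;>
        fin_cases j <;>
        (try simp) <;>
        first
          | linear_combination lam^t * E1
          | linear_combination (-(lam^t)) * E1
          | linear_combination (lam^t/2) * E2
          | linear_combination (-(lam^t/2)) * E2
    · have h1 : Aper t = A1 := by
        simp [Aper, Nat.odd_iff.mp hpar]
      have h2 : Aper (t+1) = A2 := by
        have h : (t+1) % 2 = 0 := by
          have := Nat.odd_iff.mp hpar; omega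
        simp [Aper, h]
      have hw : ((-1:ℝ))^t = -1 := hpar.neg_one_pow
      have hw' : ((-1:ℝ))^(t+1) = 1 := by rw [pow_succ, hw]; ring
      obtain (⟨j⟩|⟨j⟩)|(⟨j⟩|⟨j⟩) := i <;>
        simp [traj, MOGDA, h1, h2, A1, A2, Matrix.mulVec, Matrix.fromBlocks, dotProduct,
          Fintype.sum_sum_type, Fin.sum_univ_one, Fin.sum_univ_two, Matrix.one_apply,
          hw, hw'] <;>
        fin_cases j <;>
        (try simp) <;>
        first
          | linear_combination lam^t * E1
          | linear_combination (-(lam^t)) * E1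
          | linear_combination (lam^t/2) * E2
          | linear_combination (-(lam^t/2)) * E2
  · refine ⟨Real.sqrt 2 * a + b, by positivity, lam, hlam1, ?_⟩
    have hDelta : ∀ (s : ℕ) (B : Matrix (Fin 1) (Fin 2) ℝ), (B = A1 ∨ B = A2) →
        Delta B (traj a b lam s) = (Real.sqrt 2 * a + b) * lam^(s+1) := by
      intro s B hB
      have hv2 : ((-1:ℝ)^s)^2 = 1 := by
        rcases Nat.even_or_odd s with h | h
        · rw [h.neg_one_pow]; norm_num
        · rw [h.neg_one_pow]; norm_num
      have h2 : Real.sqrt 2 ^ 2 = 2 := Real.sq_sqrt (by norm_num)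
      have shA : ((-1:ℝ)^s*(a*lam^(s+1)))^2 + ((-1:ℝ)^s*(a*lam^(s+1)))^2
          = (Real.sqrt 2 * (a*lam^(s+1)))^2 := by
        linear_combination 2*(a*lam^(s+1))^2*hv2 - (a*lam^(s+1))^2*h2
      rcases hB with rfl | rfl
      · simp [traj, A1, Matrix.mulVec, dotProduct, Fin.sum_univ_one, Fin.sum_univ_two,
          Delta, vnorm2]
        rw [shA, show (b/2*lam^(s+1) + b/2*lam^(s+1))^2 = (b*lam^(s+1))^2 from by ring,
          Real.sqrt_sq (by positivity), Real.sqrt_sq (by positivity)]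
        ring
      · simp [traj, A2, Matrix.mulVec, dotProduct, Fin.sum_univ_one, Fin.sum_univ_two,
          Delta, vnorm2]
        rw [shA, show (-(b/2*lam^(s+1)) + -(b/2*lam^(s+1)))^2 = (b*lam^(s+1))^2 from by ring,
          Real.sqrt_sq (by positivity), Real.sqrt_sq (by positivity)]
        ring
    intro t ht
    have hmem : t ∈ Finset.Icc 1 t := Finset.mem_Icc.mpr ⟨ht, le_rfl⟩
    have hc : (0:ℝ) ≤ Real.sqrt 2 * a + b := by positivity
    have hle : (Real.sqrt 2 * a + b) * lam ^ t ≤ (Real.sqrt 2 * a + b) * lam ^ (t+1) := by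
      exact mul_le_mul_of_nonneg_left (pow_le_pow_right₀ hlam1.le (Nat.le_succ t)) hc
    constructor
    · exact le_trans hle (le_trans (le_of_eq (hDelta t A1 (Or.inl rfl)).symm)
        (Finset.le_sup' (fun s => Delta A1 (traj a b lam s)) hmem))
    · exact le_trans hle (le_trans (le_of_eq (hDelta t A2 (Or.inr rfl)).symm)
        (Finset.le_sup' (fun s => Delta A2 (traj a b lam s)) hmem))
end

section
/- Consider the periodic game with period 2 given by the 1×2 payoff matrices A_t = [1, −1] for t odd and A_t = [−1, 1] for t even, with x_t ∈ ℝ and y_t ∈ ℝ². For every step size η > 0 and all momentum parameters β₁ ≤ 0 and β₂ ≤ 0, there exist initial conditions (x_0, y_0, x_{−1}, y_{−1}) ∈ ℝ × ℝ² × ℝ × ℝ², a constant c > 0 and a real number λ > 1 such that the negative-momentum iterates satisfy sup_{s ∈ {1,...,t}} ( ‖A_iᵀ x_s‖₂ + ‖A_i y_s‖₂ ) ≥ c·λ^t for all t ≥ 1 and for both i ∈ {1, 2} (where A_1 = [1,−1] and A_2 = [−1,1]). -/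
/-!
Since `A₂ = -A₁`, consecutive payoff matrices differ by a sign. Along states of the form
`x_t = a_t • 1`, `y_t = b_t • A_tᵀ 1` this sign flip is absorbed into the frame `A_tᵀ 1`, and the
NM iteration becomes a constant-coefficient linear recurrence for `(a_t, b_t)`. Its characteristic
quartic `f` satisfies `f (-1) = -2η² < 0` and `f r → ∞` as `r → -∞`, so it has a root `r < -1`;
the corresponding geometric solution makes `‖A_iᵀ x_t‖₂` grow like `|r|^t`.
-/

open Matrix Filter

/-- The negative-momentum (NM) iterative matrix
`M_NM(A', A) = [[(1+β₁)I, −ηA, −β₁I, 0], [η(1+β₁)A'ᵀ, (1+β₂)I − η²A'ᵀA, −ηβ₁A'ᵀ, −β₂I],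
[I, 0, 0, 0], [0, I, 0, 0]]`. -/
noncomputable def MNM {n m : ℕ} (η β₁ β₂ : ℝ) (A' A : Matrix (Fin n) (Fin m) ℝ) :
    Matrix ((Fin n ⊕ Fin m) ⊕ (Fin n ⊕ Fin m)) ((Fin n ⊕ Fin m) ⊕ (Fin n ⊕ Fin m)) ℝ :=
  fromBlocks
    (fromBlocks ((1 + β₁) • 1) ((-η) • A)
      ((η * (1 + β₁)) • A'ᵀ) ((1 + β₂) • 1 - (η ^ 2) • (A'ᵀ * A)))
    (fromBlocks ((-β₁) • 1) 0 ((-(η * β₁)) • A'ᵀ) ((-β₂) • 1))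
    1 0

section NMIteration

variable {n m : ℕ} (η β₁ β₂ : ℝ)

theorem MNM_mulVec (A' A : Matrix (Fin n) (Fin m) ℝ) (x x' : Fin n → ℝ) (y y' : Fin m → ℝ) :
    MNM η β₁ β₂ A' A *ᵥ Sum.elim (Sum.elim x y) (Sum.elim x' y') =
      Sum.elim
        (Sum.elim ((1 + β₁) • x - η • A *ᵥ y - β₁ • x')
          ((η * (1 + β₁)) • A'ᵀ *ᵥ x + (1 + β₂) • y - η ^ 2 • A'ᵀ *ᵥ (A *ᵥ y)
            - (η * β₁) • A'ᵀ *ᵥ x' - β₂ • y'))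
        (Sum.elim x y) := by
  simp only [MNM, fromBlocks_mulVec, Sum.elim_comp_inl, Sum.elim_comp_inr, ← Sum.elim_add_add,
    smul_mulVec, sub_mulVec, one_mulVec, zero_mulVec, add_zero, ← mulVec_mulVec]
  congr 2 <;> module

theorem MNM_mulVec_alternating {A' A : Matrix (Fin n) (Fin m) ℝ} {ξ : Fin n → ℝ} {ζ : Fin m → ℝ}
    {κ : ℝ} (hA : A *ᵥ ζ = κ • ξ) (hA' : A'ᵀ *ᵥ ξ = -ζ) (a b a' b' : ℝ) :
    MNM η β₁ β₂ A' A *ᵥ Sum.elim (Sum.elim (a • ξ) (b • ζ)) (Sum.elim (a' • ξ) (b' • ζ)) =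
      Sum.elim
        (Sum.elim (((1 + β₁) * a - η * κ * b - β₁ * a') • ξ)
          ((-(η * (1 + β₁) * a) + (1 + β₂ + κ * η ^ 2) * b + η * β₁ * a' - β₂ * b') • ζ))
        (Sum.elim (a • ξ) (b • ζ)) := by
  rw [MNM_mulVec]
  simp only [mulVec_smul, hA, hA']
  congr 2 <;> module

end NMIteration

/-- For a root `r`, `a_k = η κ r ^ (k + 1)`, `b_k = -(r - 1) (r - β₁) r ^ k` solves the recurrence
of `MNM_mulVec_alternating`. -/
noncomputable def nmCharQuartic (η β₁ β₂ κ r : ℝ) : ℝ :=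
  (r - 1) * (r - β₁) * (r ^ 2 + (1 + β₂ + κ * η ^ 2) * r + β₂) +
    κ * η ^ 2 * r * ((1 + β₁) * r - β₁)

open Polynomial in
theorem tendsto_nmCharQuartic_neg_atTop (η β₁ β₂ κ : ℝ) :
    Tendsto (fun s => nmCharQuartic η β₁ β₂ κ (-s)) atTop atTop := by
  set P : ℝ[X] := (X + 1) * (X + C β₁) * (X ^ 2 - C (1 + β₂ + κ * η ^ 2) * X + C β₂) +
    C (κ * η ^ 2) * X * (C (1 + β₁) * X + C β₁)
  have hP : P.natDegree = 4 := by unfold P; compute_degree!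
  have hP_monic : P.Monic := by unfold P; monicity!
  have hP_deg : 0 < P.degree := by rw [degree_eq_natDegree hP_monic.ne_zero, hP]; norm_num
  convert P.tendsto_atTop_of_leadingCoeff_nonneg hP_deg (hP_monic.leadingCoeff ▸ zero_le_one)
    using 2 with s
  simp only [P, nmCharQuartic, eval_add, eval_mul, eval_sub, eval_pow, eval_X, eval_C, eval_one]
  ring

theorem exists_nmCharQuartic_eq_zero_lt_neg_one (η β₁ β₂ : ℝ) {κ : ℝ} (hκ : 0 < κ)
    (hη : η ≠ 0) : ∃ r < -1, nmCharQuartic η β₁ β₂ κ r = 0 := by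
  have h_neg_one : nmCharQuartic η β₁ β₂ κ (-1) < 0 := by
    have : 0 < κ * η ^ 2 := by positivity
    unfold nmCharQuartic
    linarith
  obtain ⟨s, hs_pos, hs_one⟩ :=
    ((tendsto_nmCharQuartic_neg_atTop η β₁ β₂ κ).eventually_gt_atTop 0
      |>.and (eventually_ge_atTop 1)).exists
  obtain ⟨r, ⟨-, hr⟩, hr_root⟩ := intermediate_value_Ioo' (neg_le_neg hs_one)
    (by unfold nmCharQuartic; fun_prop) ⟨h_neg_one, hs_pos⟩
  exact ⟨r, hr, hr_root⟩

theorem A2_eq_neg_A1 : A2 = -A1 := by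
  ext i j; fin_cases i; fin_cases j <;> simp [A1, A2]

theorem Aper_succ (t : ℕ) : Aper (t + 1) = -Aper t := by
  rcases Nat.mod_two_eq_zero_or_one t with h | h
  · simp [Aper, h, Nat.succ_mod_two_eq_one_iff.2 h, A2_eq_neg_A1]
  · simp [Aper, h, Nat.succ_mod_two_eq_zero_iff.2 h, A2_eq_neg_A1]

theorem Aper_eq_A1_or_neg_A1 (t : ℕ) : Aper t = A1 ∨ Aper t = -A1 := by
  unfold Aper; split_ifs
  · exact .inl rfl
  · exact .inr A2_eq_neg_A1

theorem A1_mul_transpose : A1 * A1ᵀ = (2 : ℝ) • 1 := by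
  ext i j; fin_cases i; fin_cases j; simp [A1, mul_apply, Fin.sum_univ_two]; norm_num

theorem Aper_mulVec_transpose_mulVec (t : ℕ) : Aper t *ᵥ ((Aper t)ᵀ *ᵥ 1) = (2 : ℝ) • 1 := by
  rw [mulVec_mulVec]
  rcases Aper_eq_A1_or_neg_A1 t with h | h <;>
    simp [h, A1_mul_transpose, smul_mulVec, one_mulVec]

theorem vnorm2_smul {ι : Type*} [Fintype ι] (c : ℝ) (v : ι → ℝ) :
    vnorm2 (c • v) = |c| * vnorm2 v := by
  simp only [vnorm2, Pi.smul_apply, smul_eq_mul, mul_pow, ← Finset.mul_sum,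
    Real.sqrt_mul' _ (Finset.sum_nonneg fun i _ => sq_nonneg (v i)), Real.sqrt_sq_eq_abs]

theorem vnorm2_transpose_mulVec_one {B : Matrix (Fin 1) (Fin 2) ℝ} (hB : B = A1 ∨ B = A2) :
    vnorm2 (Bᵀ *ᵥ 1) = √2 := by
  have hA1 : vnorm2 (A1ᵀ *ᵥ 1) = √2 := by
    simp [vnorm2, A1, mulVec, dotProduct, Fin.sum_univ_two]; norm_num
  rcases hB with rfl | rfl
  · exact hA1
  · rw [A2_eq_neg_A1, transpose_neg, neg_mulVec, ← neg_one_smul ℝ, vnorm2_smul, hA1]; simp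

theorem vnorm2_le_Delta (B : Matrix (Fin 1) (Fin 2) ℝ)
    (Z : (Fin 1 ⊕ Fin 2) ⊕ (Fin 1 ⊕ Fin 2) → ℝ) :
    vnorm2 (Bᵀ *ᵥ fun j => Z (Sum.inl (Sum.inl j))) ≤ Delta B Z :=
  le_add_of_nonneg_right (Real.sqrt_nonneg _)

/-- The geometric solution for a root `r` of `nmCharQuartic` with `κ = 2`, in the frame
`(Aper t)ᵀ *ᵥ 1`; that frame flips sign at every step, hence the sign of the `y_{t-1}` entry. -/
noncomputable def periodicMode (η β₁ r : ℝ) (t : ℕ) : (Fin 1 ⊕ Fin 2) ⊕ (Fin 1 ⊕ Fin 2) → ℝ :=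
  Sum.elim
    (Sum.elim ((2 * η * r ^ (t + 2)) • 1)
      ((-((r - 1) * (r - β₁) * r ^ (t + 1))) • (Aper t)ᵀ *ᵥ 1))
    (Sum.elim ((2 * η * r ^ (t + 1)) • 1) (((r - 1) * (r - β₁) * r ^ t) • (Aper t)ᵀ *ᵥ 1))

theorem periodicMode_succ {η β₁ β₂ r : ℝ} (hr : nmCharQuartic η β₁ β₂ 2 r = 0) (t : ℕ) :
    periodicMode η β₁ r (t + 1) =
      MNM η β₁ β₂ (Aper (t + 1)) (Aper t) *ᵥ periodicMode η β₁ r t := by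
  have hζ : (Aper (t + 1))ᵀ *ᵥ 1 = -((Aper t)ᵀ *ᵥ 1) := by
    rw [Aper_succ, transpose_neg, neg_mulVec]
  rw [periodicMode, periodicMode,
    MNM_mulVec_alternating η β₁ β₂ (Aper_mulVec_transpose_mulVec t) hζ, hζ]
  simp only [smul_neg, ← neg_smul, neg_neg]
  congr 2
  · congr 1; ring
  · congr 1
    unfold nmCharQuartic at hr
    linear_combination r ^ t * hr

theorem le_Delta_periodicMode {B : Matrix (Fin 1) (Fin 2) ℝ} (hB : B = A1 ∨ B = A2)
    (η β₁ r : ℝ) (t : ℕ) :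
    2 * √2 * |η| * r ^ 2 * |r| ^ t ≤ Delta B (periodicMode η β₁ r t) :=
  calc 2 * √2 * |η| * r ^ 2 * |r| ^ t = vnorm2 (Bᵀ *ᵥ ((2 * η * r ^ (t + 2)) • 1)) := by
        rw [mulVec_smul, vnorm2_smul, vnorm2_transpose_mulVec_one hB, abs_mul, abs_mul, abs_pow,
          pow_add, abs_two, sq_abs]
        ring
    _ ≤ Delta B (periodicMode η β₁ r t) := vnorm2_le_Delta B (periodicMode η β₁ r t)

theorem stmt2_general (η β₁ β₂ : ℝ) (hη : 0 < η) :
    ∃ Z : ℕ → (((Fin 1 ⊕ Fin 2) ⊕ (Fin 1 ⊕ Fin 2)) → ℝ),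
      (∀ t, Z (t + 1) = (MNM η β₁ β₂ (Aper (t + 1)) (Aper t)).mulVec (Z t)) ∧
      ∃ c > (0 : ℝ), ∃ lam : ℝ, 1 < lam ∧
        ∀ (t : ℕ) (ht : 1 ≤ t),
          c * lam ^ t ≤
              (Finset.Icc 1 t).sup' (Finset.nonempty_Icc.mpr ht) (fun s => Delta A1 (Z s)) ∧
          c * lam ^ t ≤
              (Finset.Icc 1 t).sup' (Finset.nonempty_Icc.mpr ht) (fun s => Delta A2 (Z s)) := by
  obtain ⟨r, hr, hr_root⟩ := exists_nmCharQuartic_eq_zero_lt_neg_one η β₁ β₂ two_pos hη.ne'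
  have hr_ne : r ≠ 0 := by linarith
  refine ⟨periodicMode η β₁ r, periodicMode_succ hr_root, 2 * √2 * |η| * r ^ 2, by positivity,
    |r|, lt_abs.2 (.inr (by linarith)), fun t ht => ?_⟩
  have ht_mem : t ∈ Finset.Icc 1 t := Finset.right_mem_Icc.2 ht
  exact ⟨Finset.le_sup'_of_le _ ht_mem (le_Delta_periodicMode (.inl rfl) η β₁ r t),
    Finset.le_sup'_of_le _ ht_mem (le_Delta_periodicMode (.inr rfl) η β₁ r t)⟩

/-- In the period-2 game `A₁ = [1,−1]` (odd rounds), `A₂ = [−1,1]` (even rounds), for every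
step size `η > 0` and momentum parameters `β₁ ≤ 0`, `β₂ ≤ 0`, there are initial conditions
(encoded in `Z 0`), a constant `c > 0` and `λ > 1` such that the negative-momentum iterates
`Z_{t+1} = M_NM(A_{t+1}, A_t) Z_t` satisfy `sup_{s ∈ {1,…,t}} Δ_{i,s} ≥ c·λ^t` for all `t ≥ 1`
and both `i ∈ {1,2}`. -/
theorem stmt2 (η β₁ β₂ : ℝ) (hη : 0 < η) (hβ₁ : β₁ ≤ 0) (hβ₂ : β₂ ≤ 0) :
    ∃ Z : ℕ → (((Fin 1 ⊕ Fin 2) ⊕ (Fin 1 ⊕ Fin 2)) → ℝ),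
      (∀ t, Z (t + 1) = (MNM η β₁ β₂ (Aper (t + 1)) (Aper t)).mulVec (Z t)) ∧
      ∃ c > (0 : ℝ), ∃ lam : ℝ, 1 < lam ∧
        ∀ (t : ℕ) (ht : 1 ≤ t),
          c * lam ^ t ≤
              (Finset.Icc 1 t).sup' (Finset.nonempty_Icc.mpr ht) (fun s => Delta A1 (Z s)) ∧
          c * lam ^ t ≤
              (Finset.Icc 1 t).sup' (Finset.nonempty_Icc.mpr ht) (fun s => Delta A2 (Z s)) :=
  stmt2_general η β₁ β₂ hη
end

section
/- Let A ∈ ℝ^{n×m} with largest singular value σ > 0, and let {B_t} ⊂ ℝ^{n×m} satisfy only lim_{t→∞} B_t = 0. Consider the EG iterates X_{t+1} = M_EG(A + B_t) X_t, X_t = (x_t, y_t), with step sizes α = γ < 1/(2σ). Then lim_{t→∞} Δ_t = 0, where Δ_t = ‖Aᵀ x_t‖₂ + ‖A y_t‖₂. -/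
open Matrix Filter

/-- Spectral (operator 2-)norm of a real matrix; this is also its largest singular value. -/
noncomputable def mnorm2 {ι κ : Type*} [Fintype ι] [Fintype κ] [DecidableEq κ]
    (M : Matrix ι κ ℝ) : ℝ :=
  ‖LinearMap.toContinuousLinearMap (Matrix.toEuclideanLin M)‖

/-- The extra-gradient (EG) iterative matrix
`M_EG(A) = [[I − αγ A Aᵀ, −α A], [α Aᵀ, I − αγ Aᵀ A]]`. -/
noncomputable def MEG {n m : ℕ} (α γ : ℝ) (A : Matrix (Fin n) (Fin m) ℝ) :
    Matrix (Fin n ⊕ Fin m) (Fin n ⊕ Fin m) ℝ :=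
  fromBlocks (1 - (α * γ) • (A * Aᵀ)) ((-α) • A) (α • Aᵀ) (1 - (α * γ) • (Aᵀ * A))

/-- `Δ_t = ‖Aᵀ x_t‖₂ + ‖A y_t‖₂` for EG state `X = (x, y)`. -/
noncomputable def DeltaEG {n m : ℕ} (A : Matrix (Fin n) (Fin m) ℝ)
    (X : (Fin n ⊕ Fin m) → ℝ) : ℝ :=
  vnorm2 (Aᵀ.mulVec fun j => X (Sum.inl j)) + vnorm2 (A.mulVec fun j => X (Sum.inr j))

/-! ### Auxiliary material -/

set_option linter.unusedSectionVars false

section helpers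
open scoped Matrix.Norms.L2Operator
variable {ι κ : Type*} [Fintype ι] [Fintype κ] [DecidableEq ι] [DecidableEq κ]

/-- Sum of squares of entries of a vector. -/
noncomputable def qn {ι : Type*} [Fintype ι] (v : ι → ℝ) : ℝ := ∑ i, v i ^ 2

lemma qn_nonneg (v : ι → ℝ) : 0 ≤ qn v := Finset.sum_nonneg fun _ _ => sq_nonneg _

lemma qn_eq_dot (v : ι → ℝ) : qn v = v ⬝ᵥ v := by
  simp [qn, dotProduct, sq]

lemma vnorm2_eq_sqrt_qn (v : ι → ℝ) : vnorm2 v = Real.sqrt (qn v) := rfl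

lemma vnorm2_eq_norm (v : ι → ℝ) : vnorm2 v = ‖(WithLp.equiv 2 (ι → ℝ)).symm v‖ := by
  have h : ∑ i, ‖(WithLp.equiv 2 (ι → ℝ)).symm v i‖ ^ 2 = ∑ i, v i ^ 2 :=
    Finset.sum_congr rfl (fun i _ => by simp [Real.norm_eq_abs, sq_abs])
  rw [EuclideanSpace.norm_eq, h, vnorm2]

lemma vnorm2_nonneg (v : ι → ℝ) : 0 ≤ vnorm2 v := Real.sqrt_nonneg _

lemma vnorm2_sq (v : ι → ℝ) : vnorm2 v ^ 2 = qn v :=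
  Real.sq_sqrt (qn_nonneg v)

lemma mnorm2_eq_norm (M : Matrix ι κ ℝ) : mnorm2 M = ‖M‖ := rfl

lemma mnorm2_nonneg (M : Matrix ι κ ℝ) : 0 ≤ mnorm2 M := norm_nonneg _

lemma mnorm2_add_le (M N : Matrix ι κ ℝ) : mnorm2 (M + N) ≤ mnorm2 M + mnorm2 N := by
  rw [mnorm2_eq_norm, mnorm2_eq_norm, mnorm2_eq_norm]; exact norm_add_le _ _

lemma mnorm2_transpose (M : Matrix ι κ ℝ) : mnorm2 Mᵀ = mnorm2 M := by
  have h : Mᵀ = Mᴴ := by ext i j; simp [conjTranspose]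
  rw [mnorm2_eq_norm, mnorm2_eq_norm, h]
  exact Matrix.l2_opNorm_conjTranspose M

lemma vnorm2_mulVec_le (M : Matrix ι κ ℝ) (v : κ → ℝ) :
    vnorm2 (M *ᵥ v) ≤ mnorm2 M * vnorm2 v := by
  have := Matrix.l2_opNorm_mulVec M ((WithLp.equiv 2 (κ → ℝ)).symm v)
  simpa [vnorm2_eq_norm, mnorm2_eq_norm] using this

lemma qn_mulVec_le (M : Matrix ι κ ℝ) (v : κ → ℝ) :
    qn (M *ᵥ v) ≤ mnorm2 M ^ 2 * qn v := by
  have h := vnorm2_mulVec_le M v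
  have h2 : vnorm2 (M *ᵥ v) ^ 2 ≤ (mnorm2 M * vnorm2 v) ^ 2 :=
    pow_le_pow_left₀ (vnorm2_nonneg _) h 2
  calc qn (M *ᵥ v) = vnorm2 (M *ᵥ v) ^ 2 := (vnorm2_sq _).symm
    _ ≤ (mnorm2 M * vnorm2 v) ^ 2 := h2
    _ = mnorm2 M ^ 2 * qn v := by rw [mul_pow, vnorm2_sq]

lemma vnorm2_sub_le (u v : ι → ℝ) : vnorm2 (u - v) ≤ vnorm2 u + vnorm2 v := by
  simp only [vnorm2_eq_norm]
  have h : (WithLp.equiv 2 (ι → ℝ)).symm (u - v)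
      = (WithLp.equiv 2 (ι → ℝ)).symm u - (WithLp.equiv 2 (ι → ℝ)).symm v := by
    simp
  rw [h]
  exact norm_sub_le _ _

lemma tendsto_mnorm2_zero {n m : ℕ} {B : ℕ → Matrix (Fin n) (Fin m) ℝ}
    (hB : Tendsto B atTop (nhds 0)) :
    Tendsto (fun t => mnorm2 (B t)) atTop (nhds 0) := by
  have hf : Continuous (fun M : Matrix (Fin n) (Fin m) ℝ =>
      LinearMap.toContinuousLinearMap (Matrix.toEuclideanLin M)) := by
    have := (((Matrix.toEuclideanLin (𝕜 := ℝ) (m := Fin n) (n := Fin m)).trans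
      LinearMap.toContinuousLinearMap).toLinearMap).continuous_of_finiteDimensional
    exact this
  have hcont : Continuous (fun M : Matrix (Fin n) (Fin m) ℝ => mnorm2 M) :=
    continuous_norm.comp hf
  have h0 : mnorm2 (0 : Matrix (Fin n) (Fin m) ℝ) = 0 := by
    simp [mnorm2, map_zero]
  have := (hcont.tendsto 0).comp hB
  rwa [h0] at this

end helpers

lemma qn_sum {n m : ℕ} (w : (Fin n ⊕ Fin m) → ℝ) :
    qn w = qn (fun i => w (Sum.inl i)) + qn (fun j => w (Sum.inr j)) := by
  simp [qn, Fintype.sum_sum_type]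

lemma dot_mulVec_eq {ι κ : Type*} [Fintype ι] [Fintype κ]
    (C : Matrix ι κ ℝ) (u : ι → ℝ) (w : κ → ℝ) :
    u ⬝ᵥ (C *ᵥ w) = (Cᵀ *ᵥ u) ⬝ᵥ w := by
  rw [dotProduct_mulVec, mulVec_transpose]

/-- Exact energy identity for one EG step with `α = γ`. -/
lemma MEG_qn_identity {n m : ℕ} (α : ℝ) (C : Matrix (Fin n) (Fin m) ℝ)
    (X : (Fin n ⊕ Fin m) → ℝ) :
    qn ((MEG α α C) *ᵥ X)
      = qn X
        - α ^ 2 * (qn (Cᵀ *ᵥ fun i => X (Sum.inl i)) + qn (C *ᵥ fun j => X (Sum.inr j)))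
        + α ^ 4 * (qn (C *ᵥ (Cᵀ *ᵥ fun i => X (Sum.inl i)))
            + qn (Cᵀ *ᵥ (C *ᵥ fun j => X (Sum.inr j)))) := by
  set x : Fin n → ℝ := fun i => X (Sum.inl i) with hx
  set y : Fin m → ℝ := fun j => X (Sum.inr j) with hy
  set a : Fin m → ℝ := Cᵀ *ᵥ x with ha
  set b : Fin n → ℝ := C *ᵥ y with hb
  set p : Fin n → ℝ := C *ᵥ a with hp
  set q : Fin m → ℝ := Cᵀ *ᵥ b with hq
  have hXel : X = Sum.elim x y := by funext i; cases i <;> rfl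
  have htop : (1 - (α * α) • (C * Cᵀ)) *ᵥ x + ((-α) • C) *ᵥ y
      = x - (α * α) • p - α • b := by
    rw [sub_mulVec, one_mulVec, smul_mulVec, smul_mulVec,
      ← mulVec_mulVec, neg_smul]
    rw [← ha, ← hb, ← hp]
    abel
  have hbot : (α • Cᵀ) *ᵥ x + (1 - (α * α) • (Cᵀ * C)) *ᵥ y
      = (α • a + y) - (α * α) • q := by
    rw [sub_mulVec, one_mulVec, smul_mulVec, smul_mulVec,
      ← mulVec_mulVec]
    rw [← ha, ← hb, ← hq]
    abel
  have hfb : (MEG α α C) *ᵥ X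
      = Sum.elim (x - (α * α) • p - α • b) ((α • a + y) - (α * α) • q) := by
    rw [MEG, hXel, fromBlocks_mulVec]
    simp only [Sum.elim_comp_inl, Sum.elim_comp_inr]
    rw [htop, hbot]
  have h1 : x ⬝ᵥ p = a ⬝ᵥ a := by rw [hp, dot_mulVec_eq, ← ha]
  have h2 : x ⬝ᵥ b = a ⬝ᵥ y := by rw [hb, dot_mulVec_eq, ← ha]
  have h3 : a ⬝ᵥ q = p ⬝ᵥ b := by rw [hq, dot_mulVec_eq, transpose_transpose, ← hp]
  have h4 : y ⬝ᵥ q = b ⬝ᵥ b := by rw [hq, dot_mulVec_eq, transpose_transpose, ← hb]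
  have h1' : p ⬝ᵥ x = a ⬝ᵥ a := (dotProduct_comm _ _).trans h1
  have h2' : b ⬝ᵥ x = a ⬝ᵥ y := (dotProduct_comm _ _).trans h2
  have h3' : q ⬝ᵥ a = p ⬝ᵥ b := (dotProduct_comm _ _).trans h3
  have h4' : q ⬝ᵥ y = b ⬝ᵥ b := (dotProduct_comm _ _).trans h4
  have h5 : y ⬝ᵥ a = a ⬝ᵥ y := dotProduct_comm _ _
  have h6 : b ⬝ᵥ p = p ⬝ᵥ b := dotProduct_comm _ _
  rw [hfb, qn_sum]
  simp only [Sum.elim_inl, Sum.elim_inr]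
  have e1 : qn (fun i => (x - (α * α) • p - α • b) i) = qn (x - (α * α) • p - α • b) := rfl
  have e2 : qn (fun j => ((α • a + y) - (α * α) • q) j) = qn ((α • a + y) - (α * α) • q) := rfl
  rw [e1, e2, qn_eq_dot, qn_eq_dot, qn_sum X]
  simp only [← hx, ← hy, ← ha, ← hb, ← hp, ← hq]
  simp only [qn_eq_dot, dotProduct_sub, sub_dotProduct, dotProduct_add, add_dotProduct,
    dotProduct_smul, smul_dotProduct, smul_eq_mul]
  rw [h1, h2, h3, h4, h1', h2', h3', h4', h5, h6]
  ring

/-- One-step descent inequality for EG when `α‖C‖₂ ≤ 1/2`. -/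
lemma MEG_descent {n m : ℕ} {α : ℝ} (hα : 0 < α) (C : Matrix (Fin n) (Fin m) ℝ)
    (hC : α * mnorm2 C ≤ 1 / 2) (X : (Fin n ⊕ Fin m) → ℝ) :
    qn ((MEG α α C) *ᵥ X) ≤ qn X - (3 / 4) * α ^ 2 *
      (qn (Cᵀ *ᵥ fun i => X (Sum.inl i)) + qn (C *ᵥ fun j => X (Sum.inr j))) := by
  rw [MEG_qn_identity]
  set a : Fin m → ℝ := Cᵀ *ᵥ fun i => X (Sum.inl i) with ha
  set b : Fin n → ℝ := C *ᵥ fun j => X (Sum.inr j) with hb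
  have h14 : α ^ 2 * mnorm2 C ^ 2 ≤ 1 / 4 := by
    have h0 : 0 ≤ α * mnorm2 C := mul_nonneg hα.le (mnorm2_nonneg C)
    nlinarith [h0, hC]
  have key : ∀ (P qa : ℝ), P ≤ mnorm2 C ^ 2 * qa → 0 ≤ qa →
      α ^ 4 * P ≤ (1 / 4) * (α ^ 2 * qa) := by
    intro P qa hP hqa
    have h1 : α ^ 4 * P ≤ α ^ 4 * (mnorm2 C ^ 2 * qa) := by
      apply mul_le_mul_of_nonneg_left hP; positivity
    have h2 : α ^ 4 * (mnorm2 C ^ 2 * qa) = (α ^ 2 * mnorm2 C ^ 2) * (α ^ 2 * qa) := by ring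
    have h3 : (α ^ 2 * mnorm2 C ^ 2) * (α ^ 2 * qa) ≤ (1 / 4) * (α ^ 2 * qa) := by
      apply mul_le_mul_of_nonneg_right h14; positivity
    linarith
  have hpa : qn (C *ᵥ a) ≤ mnorm2 C ^ 2 * qn a := qn_mulVec_le C a
  have hqb : qn (Cᵀ *ᵥ b) ≤ mnorm2 C ^ 2 * qn b := by
    have := qn_mulVec_le Cᵀ b
    rwa [mnorm2_transpose] at this
  have k1 := key _ _ hpa (qn_nonneg a)
  have k2 := key _ _ hqb (qn_nonneg b)
  nlinarith [qn_nonneg (C *ᵥ a), qn_nonneg (Cᵀ *ᵥ b)]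

/-- In a convergent perturbed game (`B_t → 0`, no summability assumed), the EG iterates
`X_{t+1} = M_EG(A + B_t) X_t` with step sizes `α = γ < 1/(2σ)` (where `σ = ‖A‖₂ > 0` is the
largest singular value of `A`) satisfy `Δ_t → 0`. -/
theorem stmt6 {n m : ℕ} (A : Matrix (Fin n) (Fin m) ℝ) (hσ : 0 < mnorm2 A)
    (B : ℕ → Matrix (Fin n) (Fin m) ℝ)
    (hB : Tendsto B atTop (nhds 0))
    (α γ : ℝ) (hα : 0 < α) (hαγ : α = γ) (hstep : α < 1 / (2 * mnorm2 A))
    (X : ℕ → ((Fin n ⊕ Fin m) → ℝ))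
    (hX : ∀ t, X (t + 1) = (MEG α γ (A + B t)).mulVec (X t)) :
    Tendsto (fun t => DeltaEG A (X t)) atTop (nhds 0) := by
  subst hαγ
  set σ := mnorm2 A with hσdef
  -- σ < 1/(2α)
  have hσlt : σ < 1 / (2 * α) := by
    have h1 : α * (2 * σ) < 1 := (lt_div_iff₀ (by positivity)).mp hstep
    have h2 : σ * (2 * α) < 1 := by nlinarith
    exact (lt_div_iff₀ (by positivity)).mpr h2
  have hBn : Tendsto (fun t => mnorm2 (B t)) atTop (nhds 0) := tendsto_mnorm2_zero hB
  set δ : ℝ := 1 / (2 * α) - σ with hδdef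
  have hδ : 0 < δ := by rw [hδdef]; linarith
  obtain ⟨T, hT⟩ : ∃ T, ∀ t ≥ T, mnorm2 (B t) < δ := by
    have := hBn.eventually (gt_mem_nhds hδ)
    exact eventually_atTop.mp this
  -- step-size condition holds for all t ≥ T
  have hσt : ∀ t ≥ T, α * mnorm2 (A + B t) ≤ 1 / 2 := by
    intro t ht
    have h1 := mnorm2_add_le A (B t)
    have h2 := hT t ht
    have h3 : mnorm2 (A + B t) ≤ 1 / (2 * α) := by
      rw [hδdef] at h2; linarith
    calc α * mnorm2 (A + B t) ≤ α * (1 / (2 * α)) :=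
          mul_le_mul_of_nonneg_left h3 hα.le
      _ = 1 / 2 := by field_simp
  -- the quantity controlled by the descent
  set D : ℕ → ℝ := fun t =>
    qn ((A + B t)ᵀ *ᵥ fun i => X t (Sum.inl i)) +
      qn ((A + B t) *ᵥ fun j => X t (Sum.inr j)) with hD
  have hDnn : ∀ t, 0 ≤ D t := fun t => add_nonneg (qn_nonneg _) (qn_nonneg _)
  have hrec : ∀ t ≥ T, qn (X (t + 1)) ≤ qn (X t) - (3 / 4) * α ^ 2 * D t := by
    intro t ht
    rw [hX t]
    exact MEG_descent hα (A + B t) (hσt t ht) (X t)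
  have hcpos : (0:ℝ) < (3 / 4) * α ^ 2 := by positivity
  have hmono : ∀ t ≥ T, qn (X (t + 1)) ≤ qn (X t) := by
    intro t ht
    have h := hrec t ht
    have h2 : 0 ≤ (3 / 4) * α ^ 2 * D t := mul_nonneg hcpos.le (hDnn t)
    linarith
  -- the shifted energy sequence
  set g : ℕ → ℝ := fun k => qn (X (T + k)) with hg
  have hganti : Antitone g := by
    apply antitone_nat_of_succ_le
    intro k
    exact hmono (T + k) (Nat.le_add_right _ _)
  have hgbd : BddBelow (Set.range g) := ⟨0, by rintro x ⟨k, rfl⟩; exact qn_nonneg _⟩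
  have hgl : Tendsto g atTop (nhds (⨅ k, g k)) := tendsto_atTop_ciInf hganti hgbd
  have hgl' : Tendsto (fun k => g (k + 1)) atTop (nhds (⨅ k, g k)) :=
    hgl.comp (tendsto_add_atTop_nat 1)
  have hdiff : Tendsto (fun k => g k - g (k + 1)) atTop (nhds 0) := by
    simpa using hgl.sub hgl'
  -- D (T+k) → 0
  have hDk : Tendsto (fun k => D (T + k)) atTop (nhds 0) := by
    have hbounds : ∀ k, D (T + k) ≤ ((3 / 4) * α ^ 2)⁻¹ * (g k - g (k + 1)) := by
      intro k
      have h := hrec (T + k) (Nat.le_add_right _ _)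
      have h2 : (3 / 4) * α ^ 2 * D (T + k) ≤ g k - g (k + 1) := by
        have e1 : g (k + 1) = qn (X ((T + k) + 1)) := rfl
        have e2 : g k = qn (X (T + k)) := rfl
        rw [e1, e2]; linarith
      rw [inv_mul_eq_div, le_div_iff₀ hcpos]
      linarith [h2]
    apply squeeze_zero (fun k => hDnn _) hbounds
    have := hdiff.const_mul (((3 / 4) * α ^ 2)⁻¹)
    rwa [mul_zero] at this
  have hD0 : Tendsto D atTop (nhds 0) := by
    rw [← tendsto_add_atTop_iff_nat T]
    have : (fun k => D (k + T)) = fun k => D (T + k) := by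
      funext k; rw [Nat.add_comm]
    rw [this]
    exact hDk
  -- component convergences (with the perturbed matrices)
  have hqa : Tendsto (fun t => qn ((A + B t)ᵀ *ᵥ fun i => X t (Sum.inl i)))
      atTop (nhds 0) := by
    apply squeeze_zero (fun t => qn_nonneg _) (g := D) _ hD0
    intro t
    have := qn_nonneg ((A + B t) *ᵥ fun j => X t (Sum.inr j))
    simp only [hD]; linarith
  have hqb : Tendsto (fun t => qn ((A + B t) *ᵥ fun j => X t (Sum.inr j)))
      atTop (nhds 0) := by
    apply squeeze_zero (fun t => qn_nonneg _) (g := D) _ hD0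
    intro t
    have := qn_nonneg ((A + B t)ᵀ *ᵥ fun i => X t (Sum.inl i))
    simp only [hD]; linarith
  have sqrt0 : Tendsto Real.sqrt (nhds 0) (nhds 0) := by
    simpa using (Real.continuous_sqrt.tendsto 0)
  have hva : Tendsto (fun t => vnorm2 ((A + B t)ᵀ *ᵥ fun i => X t (Sum.inl i)))
      atTop (nhds 0) := by
    simp only [vnorm2_eq_sqrt_qn]
    exact sqrt0.comp hqa
  have hvb : Tendsto (fun t => vnorm2 ((A + B t) *ᵥ fun j => X t (Sum.inr j)))
      atTop (nhds 0) := by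
    simp only [vnorm2_eq_sqrt_qn]
    exact sqrt0.comp hqb
  -- uniform bound on the state
  set K : ℝ := qn (X T) with hK
  have hbound : ∀ t ≥ T, qn (X t) ≤ K := by
    intro t ht
    induction t, ht using Nat.le_induction with
    | base => exact le_refl _
    | succ t ht ih => exact le_trans (hmono t ht) ih
  have hxb : ∀ t ≥ T, vnorm2 (fun i => X t (Sum.inl i)) ≤ Real.sqrt K := by
    intro t ht
    rw [vnorm2_eq_sqrt_qn]
    apply Real.sqrt_le_sqrt
    have := qn_sum (X t)
    have h2 := qn_nonneg (fun j => X t (Sum.inr j))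
    have := hbound t ht
    linarith
  have hyb : ∀ t ≥ T, vnorm2 (fun j => X t (Sum.inr j)) ≤ Real.sqrt K := by
    intro t ht
    rw [vnorm2_eq_sqrt_qn]
    apply Real.sqrt_le_sqrt
    have := qn_sum (X t)
    have h2 := qn_nonneg (fun i => X t (Sum.inl i))
    have := hbound t ht
    linarith
  -- transfer from A + B t to A
  have hAx : Tendsto (fun t => vnorm2 (Aᵀ *ᵥ fun i => X t (Sum.inl i)))
      atTop (nhds 0) := by
    apply squeeze_zero' (Eventually.of_forall fun t => vnorm2_nonneg _)
      (g := fun t => vnorm2 ((A + B t)ᵀ *ᵥ fun i => X t (Sum.inl i))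
        + mnorm2 (B t) * Real.sqrt K)
    · filter_upwards [eventually_atTop.mpr ⟨T, fun t (ht : T ≤ t) => ht⟩] with t ht
      have hsplit : Aᵀ *ᵥ (fun i => X t (Sum.inl i))
          = ((A + B t)ᵀ *ᵥ fun i => X t (Sum.inl i))
            - ((B t)ᵀ *ᵥ fun i => X t (Sum.inl i)) := by
        rw [transpose_add, add_mulVec]
        abel
      rw [hsplit]
      refine le_trans (vnorm2_sub_le _ _) ?_
      have h1 : vnorm2 ((B t)ᵀ *ᵥ fun i => X t (Sum.inl i))
          ≤ mnorm2 (B t) * Real.sqrt K := by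
        refine le_trans (vnorm2_mulVec_le _ _) ?_
        rw [mnorm2_transpose]
        exact mul_le_mul_of_nonneg_left (hxb t ht) (mnorm2_nonneg _)
      linarith
    · have := hva.add (hBn.mul_const (Real.sqrt K))
      simpa using this
  have hAy : Tendsto (fun t => vnorm2 (A *ᵥ fun j => X t (Sum.inr j)))
      atTop (nhds 0) := by
    apply squeeze_zero' (Eventually.of_forall fun t => vnorm2_nonneg _)
      (g := fun t => vnorm2 ((A + B t) *ᵥ fun j => X t (Sum.inr j))
        + mnorm2 (B t) * Real.sqrt K)
    · filter_upwards [eventually_atTop.mpr ⟨T, fun t (ht : T ≤ t) => ht⟩] with t ht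
      have hsplit : A *ᵥ (fun j => X t (Sum.inr j))
          = ((A + B t) *ᵥ fun j => X t (Sum.inr j))
            - ((B t) *ᵥ fun j => X t (Sum.inr j)) := by
        rw [add_mulVec]
        abel
      rw [hsplit]
      refine le_trans (vnorm2_sub_le _ _) ?_
      have h1 : vnorm2 ((B t) *ᵥ fun j => X t (Sum.inr j))
          ≤ mnorm2 (B t) * Real.sqrt K := by
        refine le_trans (vnorm2_mulVec_le _ _) ?_
        exact mul_le_mul_of_nonneg_left (hyb t ht) (mnorm2_nonneg _)
      linarith
    · have := hvb.add (hBn.mul_const (Real.sqrt K))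
      simpa using this
  have := hAx.add hAy
  simpa [DeltaEG] using this
end

section
/- Let A ∈ ℝ^{n×m} with largest singular value σ > 0, and let the EG step sizes satisfy α = γ < 1/(2σ). Then: (i) if n = m and A is invertible, every (complex) eigenvalue of M_EG(A) has modulus strictly less than 1; (ii) if A has a zero singular value (in particular whenever A is not an invertible square matrix), then 1 is an eigenvalue of M_EG(A) and every eigenvalue of M_EG(A) other than 1 has modulus strictly less than 1. -/
/-!
With `α = γ`, `M_EG(A) = p(S)` for the skew-symmetric dilation `S = [[0, -A], [Aᵀ, 0]]` and
`p(z) = 1 + αz + α²z²`. Every eigenvalue of `S` is `iλ` with `|λ| ≤ σ`, so by spectral mapping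
every eigenvalue of `M_EG(A)` is `p(iλ) = 1 - α²λ² + iαλ`, whose squared modulus is `1 - t + t²`
with `t = α²λ² < 1/4`. This is `< 1` unless `λ = 0`, and `0` is an eigenvalue of `S` exactly when
`A` or `Aᵀ` has a nontrivial kernel.
-/

open Matrix Filter

/-- `μ : ℂ` is an eigenvalue of the real matrix `M`. -/
def IsEig {d : Type*} [Fintype d] (M : Matrix d d ℝ) (μ : ℂ) : Prop :=
  ∃ v : d → ℂ, v ≠ 0 ∧ (M.map (fun x : ℝ => (x : ℂ))).mulVec v = μ • v

open Polynomial Complex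
open scoped Matrix.Norms.L2Operator

lemma mnorm2_eq_l2_opNorm {ι κ : Type*} [Fintype ι] [Fintype κ] [DecidableEq κ]
    (M : Matrix ι κ ℝ) : mnorm2 M = ‖M‖ :=
  rfl

lemma EuclideanSpace.norm_sq_sumElim {𝕜 m n : Type*} [RCLike 𝕜] [Fintype m] [Fintype n]
    (x : m → 𝕜) (y : n → 𝕜) :
    ‖WithLp.toLp 2 (Sum.elim x y)‖ ^ 2 = ‖WithLp.toLp 2 x‖ ^ 2 + ‖WithLp.toLp 2 y‖ ^ 2 := by
  simp [EuclideanSpace.norm_sq_eq, Fintype.sum_sum_type]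

lemma EuclideanSpace.norm_sq_eq_re_add_im {n : Type*} [Fintype n] (w : n → ℂ) :
    ‖WithLp.toLp 2 w‖ ^ 2 =
      ‖WithLp.toLp 2 fun i => (w i).re‖ ^ 2 + ‖WithLp.toLp 2 fun i => (w i).im‖ ^ 2 := by
  simp only [EuclideanSpace.norm_sq_eq, Complex.sq_norm, Complex.normSq_apply, Real.norm_eq_abs,
    sq_abs, ← Finset.sum_add_distrib]
  simp [sq]

lemma Matrix.re_map_ofReal_mulVec {m n : Type*} [Fintype n] (B : Matrix m n ℝ) (w : n → ℂ) :
    (fun i => ((B.map ofReal *ᵥ w) i).re) = B *ᵥ fun j => (w j).re := by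
  ext i
  simp [mulVec, dotProduct]

lemma Matrix.im_map_ofReal_mulVec {m n : Type*} [Fintype n] (B : Matrix m n ℝ) (w : n → ℂ) :
    (fun i => ((B.map ofReal *ᵥ w) i).im) = B *ᵥ fun j => (w j).im := by
  ext i
  simp [mulVec, dotProduct]

section L2OpNorm

variable {𝕜 m n : Type*} [RCLike 𝕜] [Fintype m] [Fintype n] [DecidableEq n]

lemma Matrix.norm_sq_mulVec_le (M : Matrix m n 𝕜) (x : n → 𝕜) :
    ‖WithLp.toLp 2 (M *ᵥ x)‖ ^ 2 ≤ ‖M‖ ^ 2 * ‖WithLp.toLp 2 x‖ ^ 2 := by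
  rw [← mul_pow]
  gcongr
  simpa using M.l2_opNorm_mulVec (WithLp.toLp 2 x)

lemma Matrix.l2_opNorm_le_of_norm_sq_mulVec_le (M : Matrix m n 𝕜) {c : ℝ} (hc : 0 ≤ c)
    (h : ∀ x : n → 𝕜, ‖WithLp.toLp 2 (M *ᵥ x)‖ ^ 2 ≤ c ^ 2 * ‖WithLp.toLp 2 x‖ ^ 2) :
    ‖M‖ ≤ c := by
  rw [l2_opNorm_def]
  refine ContinuousLinearMap.opNorm_le_bound _ hc fun x => ?_
  refine (pow_le_pow_iff_left₀ (norm_nonneg _) (by positivity) two_ne_zero).1 ?_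
  simpa [mul_pow, Matrix.toLpLin_apply] using h x.ofLp

lemma Matrix.l2_opNorm_map_ofReal_le (B : Matrix m n ℝ) : ‖B.map ofReal‖ ≤ ‖B‖ := by
  refine l2_opNorm_le_of_norm_sq_mulVec_le _ (norm_nonneg _) fun w => ?_
  rw [EuclideanSpace.norm_sq_eq_re_add_im, re_map_ofReal_mulVec, im_map_ofReal_mulVec,
    EuclideanSpace.norm_sq_eq_re_add_im w, mul_add]
  exact add_le_add (B.norm_sq_mulVec_le _) (B.norm_sq_mulVec_le _)

lemma Matrix.norm_le_l2_opNorm_of_mem_spectrum {M : Matrix n n 𝕜} {z : 𝕜}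
    (hz : z ∈ spectrum 𝕜 M) : ‖z‖ ≤ ‖M‖ := by
  cases subsingleton_or_nontrivial (Matrix n n 𝕜)
  · simp [spectrum.of_subsingleton] at hz
  · exact spectrum.norm_le_norm_of_mem hz

end L2OpNorm

theorem re_eq_zero_of_mem_spectrum_of_star_eq_neg {A : Type*} [CStarAlgebra A] {a : A}
    (ha : star a = -a) {z : ℂ} (hz : z ∈ spectrum ℂ a) : z.re = 0 := by
  have hIa : IsSelfAdjoint (I • a) := by
    simp [IsSelfAdjoint, star_smul, ha]
  simpa using hIa.im_eq_zero_of_mem_spectrum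
    (spectrum.smul_mem_smul_iff (r := Units.mk0 I I_ne_zero) |>.mpr hz)

lemma Matrix.mem_spectrum_iff_exists_mulVec_eq_smul {K n : Type*} [Field K] [Fintype n]
    [DecidableEq n] (M : Matrix n n K) (μ : K) :
    μ ∈ spectrum K M ↔ ∃ v ≠ 0, M *ᵥ v = μ • v := by
  rw [spectrum.mem_iff, isUnit_iff_isUnit_det, isUnit_iff_ne_zero, not_not,
    ← exists_mulVec_eq_zero_iff]
  simp [Algebra.algebraMap_eq_smul_one, sub_mulVec, sub_eq_zero, eq_comm, smul_mulVec]

lemma isEig_iff_mem_spectrum {d : Type*} [Fintype d] [DecidableEq d] (M : Matrix d d ℝ)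
    (μ : ℂ) : IsEig M μ ↔ μ ∈ spectrum ℂ (M.map ofReal) :=
  (mem_spectrum_iff_exists_mulVec_eq_smul _ μ).symm

lemma zero_mem_spectrum_map_ofReal_iff {d : Type*} [Fintype d] [DecidableEq d]
    (M : Matrix d d ℝ) : (0 : ℂ) ∈ spectrum ℂ (M.map ofReal) ↔ ∃ v ≠ 0, M *ᵥ v = 0 := by
  have hdet : (M.map ofReal).det = (M.det : ℂ) := (RingHom.map_det ofRealHom M).symm
  rw [spectrum.zero_mem_iff, isUnit_iff_isUnit_det, isUnit_iff_ne_zero, not_not, hdet,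
    ofReal_eq_zero, exists_mulVec_eq_zero_iff]

lemma Complex.norm_quadratic_lt_one_of_re_eq_zero {α : ℝ} {z : ℂ} (hα : 0 < α) (hre : z.re = 0)
    (hz : z ≠ 0) (hαz : α * ‖z‖ < 1) : ‖((α * α : ℝ) : ℂ) * z ^ 2 + α * z + 1‖ < 1 := by
  obtain ⟨y, rfl⟩ : ∃ y : ℝ, z = y * I := ⟨z.im, Complex.ext (by simp [hre]) (by simp)⟩
  have ht : 0 < (α * y) ^ 2 := by
    have hy : y ≠ 0 := by rintro rfl; simp at hz
    positivity
  have ht1 : (α * y) ^ 2 < 1 := by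
    rw [norm_mul, norm_I, mul_one, norm_real, Real.norm_eq_abs] at hαz
    rw [← sq_abs, abs_mul, abs_of_pos hα]
    exact pow_lt_one₀ (by positivity) hαz two_ne_zero
  have hval : ((α * α : ℝ) : ℂ) * (y * I) ^ 2 + α * (y * I) + 1
      = ((1 - (α * y) ^ 2 : ℝ) : ℂ) + ((α * y : ℝ) : ℂ) * I := by
    push_cast
    linear_combination ((α * y) ^ 2 : ℂ) * I_sq
  have hsq : ‖((α * α : ℝ) : ℂ) * (y * I) ^ 2 + α * (y * I) + 1‖ ^ 2
      = 1 - (α * y) ^ 2 + ((α * y) ^ 2) ^ 2 := by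
    rw [hval, Complex.sq_norm, normSq_add_mul_I]
    ring
  refine (pow_lt_one_iff_of_nonneg (norm_nonneg _) two_ne_zero).1 ?_
  rw [hsq]
  nlinarith

def Matrix.skewDilation {R m n : Type*} [Neg R] [Star R] [Zero R] (A : Matrix m n R) :
    Matrix (m ⊕ n) (m ⊕ n) R :=
  fromBlocks 0 (-A) Aᴴ 0

lemma Matrix.conjTranspose_skewDilation {R m n : Type*} [Ring R] [StarRing R] (A : Matrix m n R) :
    A.skewDilationᴴ = -A.skewDilation := by
  simp [skewDilation, fromBlocks_conjTranspose, fromBlocks_neg]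

lemma Matrix.skewDilation_map_ofReal {m n : Type*} (A : Matrix m n ℝ) :
    A.skewDilation.map ofReal = (A.map ofReal).skewDilation := by
  ext (i | i) (j | j) <;> simp [skewDilation]

section SkewDilation

variable {m n : Type*} [Fintype m] [Fintype n]

lemma Matrix.skewDilation_mulVec {R : Type*} [Ring R] [StarRing R] (A : Matrix m n R)
    (w : m ⊕ n → R) :
    A.skewDilation *ᵥ w = Sum.elim (-(A *ᵥ (w ∘ Sum.inr))) (Aᴴ *ᵥ (w ∘ Sum.inl)) := by
  simp [skewDilation, fromBlocks_mulVec, neg_mulVec]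

lemma Matrix.exists_skewDilation_mulVec_eq_zero_iff {R : Type*} [Ring R] [StarRing R]
    (A : Matrix m n R) :
    (∃ w ≠ 0, A.skewDilation *ᵥ w = 0) ↔ (∃ y ≠ 0, A *ᵥ y = 0) ∨ (∃ x ≠ 0, Aᴴ *ᵥ x = 0) := by
  constructor
  · rintro ⟨w, hw, hSw⟩
    rw [skewDilation_mulVec, ← Sum.elim_zero_zero, Sum.elim_eq_iff, neg_eq_zero] at hSw
    by_cases hr : w ∘ Sum.inr = 0
    · refine Or.inr ⟨w ∘ Sum.inl, fun hl => hw ?_, hSw.2⟩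
      rw [← Sum.elim_comp_inl_inr w, hl, hr, Sum.elim_zero_zero]
    · exact Or.inl ⟨w ∘ Sum.inr, hr, hSw.1⟩
  · rintro (⟨y, hy, hAy⟩ | ⟨x, hx, hAx⟩)
    · refine ⟨Sum.elim 0 y, by simpa [← Sum.elim_zero_zero, Sum.elim_eq_iff] using hy, ?_⟩
      simp [skewDilation_mulVec, hAy, ← Sum.elim_zero_zero]
    · refine ⟨Sum.elim x 0, by simpa [← Sum.elim_zero_zero, Sum.elim_eq_iff] using hx, ?_⟩
      simp [skewDilation_mulVec, hAx, ← Sum.elim_zero_zero]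

variable [DecidableEq m] [DecidableEq n]

lemma Matrix.l2_opNorm_skewDilation_le {𝕜 : Type*} [RCLike 𝕜] (A : Matrix m n 𝕜) :
    ‖A.skewDilation‖ ≤ ‖A‖ := by
  refine l2_opNorm_le_of_norm_sq_mulVec_le _ (norm_nonneg _) fun w => ?_
  conv_rhs => rw [← Sum.elim_comp_inl_inr w, EuclideanSpace.norm_sq_sumElim, mul_add, add_comm]
  rw [skewDilation_mulVec, EuclideanSpace.norm_sq_sumElim, WithLp.toLp_neg, norm_neg]
  refine add_le_add (A.norm_sq_mulVec_le _) ?_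
  simpa [l2_opNorm_conjTranspose] using Aᴴ.norm_sq_mulVec_le (w ∘ Sum.inl)

lemma Matrix.re_eq_zero_and_norm_le_of_mem_spectrum_skewDilation (A : Matrix m n ℝ) {z : ℂ}
    (hz : z ∈ spectrum ℂ (A.map ofReal).skewDilation) : z.re = 0 ∧ ‖z‖ ≤ ‖A‖ :=
  ⟨re_eq_zero_of_mem_spectrum_of_star_eq_neg (conjTranspose_skewDilation _) hz,
    (norm_le_l2_opNorm_of_mem_spectrum hz).trans
      ((l2_opNorm_skewDilation_le _).trans A.l2_opNorm_map_ofReal_le)⟩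

lemma Matrix.zero_mem_spectrum_skewDilation_iff (A : Matrix m n ℝ) :
    (0 : ℂ) ∈ spectrum ℂ (A.map ofReal).skewDilation ↔
      (∃ y ≠ 0, A *ᵥ y = 0) ∨ (∃ x ≠ 0, Aᵀ *ᵥ x = 0) := by
  rw [← skewDilation_map_ofReal, zero_mem_spectrum_map_ofReal_iff,
    exists_skewDilation_mulVec_eq_zero_iff, conjTranspose_eq_transpose_of_trivial]

end SkewDilation

lemma Matrix.zero_notMem_spectrum_skewDilation {n : Type*} [Fintype n] [DecidableEq n]
    {A : Matrix n n ℝ} (hA : IsUnit A.det) :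
    (0 : ℂ) ∉ spectrum ℂ (A.map ofReal).skewDilation := by
  rw [zero_mem_spectrum_skewDilation_iff, exists_mulVec_eq_zero_iff, exists_mulVec_eq_zero_iff,
    det_transpose, or_self]
  exact hA.ne_zero

section MEG

variable {n m : ℕ}

lemma MEG_eq (α γ : ℝ) (A : Matrix (Fin n) (Fin m) ℝ) :
    MEG α γ A = 1 + α • A.skewDilation + (α * γ) • A.skewDilation ^ 2 := by
  simp only [MEG, skewDilation, sq, fromBlocks_multiply, conjTranspose_eq_transpose_of_trivial]
  rw [← fromBlocks_one, fromBlocks_smul, fromBlocks_smul, fromBlocks_add, fromBlocks_add]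
  congr 1 <;> simp [sub_eq_add_neg]

lemma MEG_map_ofReal_eq_aeval (α γ : ℝ) (A : Matrix (Fin n) (Fin m) ℝ) :
    (MEG α γ A).map ofReal =
      aeval (A.map ofReal).skewDilation (C ((α * γ : ℝ) : ℂ) * X ^ 2 + C (α : ℂ) * X + 1) := by
  have hS : (Algebra.ofId ℝ ℂ).mapMatrix A.skewDilation = (A.map ofReal).skewDilation :=
    A.skewDilation_map_ofReal
  -- `Matrix.map ofReal` is the `ℝ`-algebra map `(Algebra.ofId ℝ ℂ).mapMatrix`.
  change (Algebra.ofId ℝ ℂ).mapMatrix (MEG α γ A) = _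
  rw [MEG_eq, map_add, map_add, map_smul, map_smul, map_pow, map_one, hS]
  simp only [map_add, map_mul, map_pow, aeval_C, aeval_X, map_one,
    Algebra.algebraMap_eq_smul_one, smul_mul_assoc, one_mul, Complex.coe_smul]
  abel

lemma isEig_MEG_one (α γ : ℝ) {A : Matrix (Fin n) (Fin m) ℝ}
    (hA : (0 : ℂ) ∈ spectrum ℂ (A.map ofReal).skewDilation) : IsEig (MEG α γ A) 1 := by
  rw [isEig_iff_mem_spectrum, MEG_map_ofReal_eq_aeval]
  exact spectrum.subset_polynomial_aeval _ _ ⟨0, hA, by simp⟩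

lemma norm_lt_one_or_of_isEig_MEG {α : ℝ} (hα : 0 < α) {A : Matrix (Fin n) (Fin m) ℝ}
    (hαA : α * ‖A‖ < 1 / 2) {μ : ℂ} (hμ : IsEig (MEG α α A) μ) :
    ‖μ‖ < 1 ∨ (μ = 1 ∧ (0 : ℂ) ∈ spectrum ℂ (A.map ofReal).skewDilation) := by
  rw [isEig_iff_mem_spectrum, MEG_map_ofReal_eq_aeval,
    spectrum.map_polynomial_aeval_of_degree_pos] at hμ
  · obtain ⟨z, hz, rfl⟩ := hμ
    obtain ⟨hre, hzA⟩ := A.re_eq_zero_and_norm_le_of_mem_spectrum_skewDilation hz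
    rcases eq_or_ne z 0 with rfl | hz0
    · exact Or.inr ⟨by simp, hz⟩
    · refine Or.inl ?_
      have hαz : α * ‖z‖ < 1 :=
        (mul_le_mul_of_nonneg_left hzA hα.le).trans_lt (hαA.trans (by norm_num))
      simpa using Complex.norm_quadratic_lt_one_of_re_eq_zero hα hre hz0 hαz
  · rw [← C_1, degree_quadratic (by simp [hα.ne'])]
    exact two_pos

end MEG

/-- With EG step sizes `α = γ < 1/(2σ)`, `σ = ‖A‖₂ > 0` the largest singular value:
(i) if `A` is an invertible square matrix, every complex eigenvalue of `M_EG(A)` has modulus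
`< 1`; (ii) if `A` has a zero singular value (i.e. `A` or `Aᵀ` has a nontrivial kernel, which
is the case whenever `A` is not an invertible square matrix), then `1` is an eigenvalue of
`M_EG(A)` and all other eigenvalues have modulus `< 1`. -/
theorem stmt7 (α γ : ℝ) (hα : 0 < α) (hαγ : α = γ) :
    (∀ (n : ℕ) (A : Matrix (Fin n) (Fin n) ℝ), 0 < mnorm2 A →
      α < 1 / (2 * mnorm2 A) → IsUnit A.det →
      ∀ μ : ℂ, IsEig (MEG α γ A) μ → ‖μ‖ < 1) ∧
    (∀ (n m : ℕ) (A : Matrix (Fin n) (Fin m) ℝ), 0 < mnorm2 A →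
      α < 1 / (2 * mnorm2 A) →
      ((∃ y : Fin m → ℝ, y ≠ 0 ∧ A.mulVec y = 0) ∨
        (∃ x : Fin n → ℝ, x ≠ 0 ∧ Aᵀ.mulVec x = 0)) →
      IsEig (MEG α γ A) 1 ∧
        ∀ μ : ℂ, IsEig (MEG α γ A) μ → μ ≠ 1 → ‖μ‖ < 1) := by
  subst hαγ
  have hαA : ∀ {n m : ℕ} (A : Matrix (Fin n) (Fin m) ℝ), 0 < mnorm2 A →
      α < 1 / (2 * mnorm2 A) → α * ‖A‖ < 1 / 2 := by
    intro n m A hσ hlt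
    rw [lt_div_iff₀ (by positivity), mnorm2_eq_l2_opNorm] at hlt
    linarith
  refine ⟨fun n A hσ hlt hdet μ hμ => ?_, fun n m A hσ hlt hker => ⟨?_, fun μ hμ hμ1 => ?_⟩⟩
  · exact (norm_lt_one_or_of_isEig_MEG hα (hαA A hσ hlt) hμ).resolve_right
      fun h => zero_notMem_spectrum_skewDilation hdet h.2
  · exact isEig_MEG_one α α ((zero_mem_spectrum_skewDilation_iff A).2 hker)
  · exact (norm_lt_one_or_of_isEig_MEG hα (hαA A hσ hlt) hμ).resolve_right fun h => hμ1 h.1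
end

section
/- Let A ∈ ℝ^{n×m} with largest singular value σ > 0, and let the OGDA step size satisfy η < 1/(2σ). Consider the time-independent OGDA iterative matrix M = M_OGDA(A, A). Then: (i) if n = m and A is invertible, every (complex) eigenvalue of M has modulus strictly less than 1; (ii) if A has a zero singular value (in particular whenever A is not an invertible square matrix), then 1 is an eigenvalue of M and every eigenvalue of M other than 1 has modulus strictly less than 1. -/
/-!
Write `J = [[0, A], [-Aᵀ, 0]]`, so that `M_OGDA(A, A) = [[I - 2ηJ, ηJ], [I, 0]]`. An eigenvector
`(μw, w)` of `M` gives `η(1 - 2μ) Jw = (μ² - μ) w`. Since `J` is real skew-symmetric, pairing with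
`w` yields `μ² - μ = i d (1 - 2μ)` for a real `d = ηc` with `|c| ≤ σ`, hence `d² < 1/4`. For
`μ = a + bi` the imaginary part reads `(2a - 1)(b + d) = 0`; `a = 1/2` contradicts `d² < 1/4`, and
`b = -d` gives `|μ|² = a = a² + d²`, so `|μ| < 1` unless `μ = 1`. Finally `μ = 1` forces `Jw = 0`,
impossible for invertible `A`, while a real kernel vector `u` of `J` gives the fixed vector
`(u, u)` of `M`.
-/

open Matrix Filter

open Complex ComplexConjugate WithLp

lemma sumElim_ne_zero_iff {α β M : Type*} [Zero M] {x : α → M} {y : β → M} :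
    Sum.elim x y ≠ 0 ↔ x ≠ 0 ∨ y ≠ 0 := by
  rw [Ne, ← Sum.elim_zero_zero, Sum.elim_eq_iff, not_and_or]

lemma star_dotProduct_self_eq_norm_sq {ι : Type*} [Fintype ι] (w : ι → ℂ) :
    star w ⬝ᵥ w = ((‖toLp 2 w‖ ^ 2 : ℝ) : ℂ) := by
  rw [dotProduct_comm, ← EuclideanSpace.inner_toLp_toLp, inner_self_eq_norm_sq_to_K]
  push_cast; rfl

lemma isEig_of_mulVec_eq_smul {d : Type*} [Fintype d] {M : Matrix d d ℝ} {v : d → ℝ} (hv : v ≠ 0)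
    {r : ℝ} (h : M *ᵥ v = r • v) : IsEig M r := by
  refine ⟨ofReal ∘ v, fun h0 => hv ?_, ?_⟩
  · ext i; simpa using congrFun h0 i
  · ext i
    calc _ = ofRealHom ((M *ᵥ v) i) := (RingHom.map_mulVec ofRealHom M v i).symm
      _ = _ := by simp [h]

lemma norm_lt_one_of_sq_sub_self_eq {d : ℝ} (hd : d ^ 2 < 1 / 4) {μ : ℂ} (hμ : μ ≠ 1)
    (h : μ ^ 2 - μ = d * I * (1 - 2 * μ)) : ‖μ‖ < 1 := by
  obtain ⟨a, b, rfl⟩ : ∃ a b : ℝ, μ = a + b * I := ⟨μ.re, μ.im, (re_add_im μ).symm⟩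
  have hre := congrArg re h
  have him := congrArg im h
  simp only [sq, sub_re, sub_im, mul_re, mul_im, add_re, add_im, ofReal_re, ofReal_im, I_re, I_im,
    one_re, one_im, re_ofNat, im_ofNat] at hre him
  replace hre : a ^ 2 - b ^ 2 - a = 2 * d * b := by linear_combination hre
  replace him : (2 * a - 1) * (b + d) = 0 := by linear_combination him
  have hb : b = -d := by
    rcases mul_eq_zero.mp him with hhalf | hbd
    · nlinarith [sq_nonneg (b + d)]
    · linear_combination hbd
  subst hb
  have ha1 : a ≠ 1 := by
    rintro rfl
    have hd0 : d = 0 := by nlinarith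
    exact hμ (by simp [hd0])
  have hnorm : ‖(a : ℂ) + (-d : ℝ) * I‖ ^ 2 = a := by
    rw [Complex.sq_norm, normSq_add_mul_I]; linarith
  have ha : a < 1 := lt_of_le_of_ne (by nlinarith) ha1
  nlinarith [norm_nonneg ((a : ℂ) + (-d : ℝ) * I)]

lemma exists_mulVec_eq_of_fromBlocks_mulVec_eq {R ι : Type*} [CommRing R] [Fintype ι]
    [DecidableEq ι] (J : Matrix ι ι R) (c μ : R) (v : ι ⊕ ι → R) (hv : v ≠ 0)
    (h : fromBlocks (1 - (2 * c) • J) (c • J) 1 0 *ᵥ v = μ • v) :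
    ∃ w, w ≠ 0 ∧ (c * (1 - 2 * μ)) • (J *ᵥ w) = (μ ^ 2 - μ) • w := by
  rw [fromBlocks_mulVec] at h
  set w := v ∘ Sum.inr
  have hlow : v ∘ Sum.inl = μ • w := by
    ext i; simpa [w] using congrFun h (Sum.inr i)
  have hup : (1 - (2 * c) • J) *ᵥ (μ • w) + (c • J) *ᵥ w = μ • (μ • w) := by
    rw [← hlow]; ext i; simpa using congrFun h (Sum.inl i)
  refine ⟨w, fun hw => hv ?_, ?_⟩
  · rw [← Sum.elim_comp_inl_inr v, hlow]
    change Sum.elim (μ • w) w = 0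
    rw [hw, smul_zero, Sum.elim_zero_zero]
  · rw [sub_mulVec, one_mulVec, smul_mulVec, smul_mulVec, mulVec_smul] at hup
    ext i
    have hi := congrFun hup i
    simp only [Pi.add_apply, Pi.sub_apply, Pi.smul_apply, smul_eq_mul] at hi ⊢
    linear_combination hi

section Complexification

variable {ι κ : Type*} [Fintype ι] [Fintype κ]

lemma norm_mulVec_le_mnorm2 [DecidableEq κ] (A : Matrix ι κ ℝ) (y : κ → ℝ) :
    ‖toLp 2 (A *ᵥ y)‖ ≤ mnorm2 A * ‖toLp 2 y‖ :=
  (LinearMap.toContinuousLinearMap (toEuclideanLin A)).le_opNorm (toLp 2 y)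

lemma norm_sq_toLp_eq_re_add_im (z : κ → ℂ) :
    ‖toLp 2 z‖ ^ 2 = ‖toLp 2 (fun i => (z i).re)‖ ^ 2 + ‖toLp 2 (fun i => (z i).im)‖ ^ 2 := by
  simp only [EuclideanSpace.norm_sq_eq, ← Finset.sum_add_distrib, Complex.sq_norm,
    normSq_apply, Real.norm_eq_abs, sq_abs]
  congr 1; ext; ring

lemma norm_map_ofReal_mulVec_le [DecidableEq κ] (A : Matrix ι κ ℝ) (z : κ → ℂ) :
    ‖toLp 2 (A.map ofReal *ᵥ z)‖ ≤ mnorm2 A * ‖toLp 2 z‖ := by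
  have hre : (fun i => (A.map ofReal *ᵥ z) i |>.re) = A *ᵥ fun j => (z j).re := by
    ext i; simp [mulVec, dotProduct, re_sum]
  have him : (fun i => (A.map ofReal *ᵥ z) i |>.im) = A *ᵥ fun j => (z j).im := by
    ext i; simp [mulVec, dotProduct, im_sum]
  have hσ : 0 ≤ mnorm2 A := norm_nonneg _
  refine (pow_le_pow_iff_left₀ (norm_nonneg _) (by positivity) two_ne_zero).mp ?_
  rw [norm_sq_toLp_eq_re_add_im, hre, him, mul_pow, norm_sq_toLp_eq_re_add_im, mul_add,
    ← mul_pow, ← mul_pow]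
  gcongr <;> exact norm_mulVec_le_mnorm2 A _

noncomputable def skewBlock (A : Matrix ι κ ℝ) : Matrix (ι ⊕ κ) (ι ⊕ κ) ℂ :=
  fromBlocks 0 (A.map ofReal) (-(A.map ofReal)ᵀ) 0

lemma norm_sq_toLp_sumElim (w : ι ⊕ κ → ℂ) :
    ‖toLp 2 w‖ ^ 2 = ‖toLp 2 (w ∘ Sum.inl)‖ ^ 2 + ‖toLp 2 (w ∘ Sum.inr)‖ ^ 2 := by
  simp only [EuclideanSpace.norm_sq_eq, Fintype.sum_sum_type]
  rfl

lemma two_mul_abs_im_star_dotProduct_mulVec_le [DecidableEq κ] (A : Matrix ι κ ℝ)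
    (x : ι → ℂ) (y : κ → ℂ) :
    2 * |(star x ⬝ᵥ (A.map ofReal *ᵥ y)).im| ≤
      mnorm2 A * (‖toLp 2 x‖ ^ 2 + ‖toLp 2 y‖ ^ 2) := by
  have hCS : ‖star x ⬝ᵥ (A.map ofReal *ᵥ y)‖ ≤ ‖toLp 2 x‖ * ‖toLp 2 (A.map ofReal *ᵥ y)‖ := by
    rw [dotProduct_comm, ← EuclideanSpace.inner_toLp_toLp]
    exact norm_inner_le_norm _ _
  have hσ : 0 ≤ mnorm2 A := norm_nonneg _
  calc 2 * |(star x ⬝ᵥ (A.map ofReal *ᵥ y)).im|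
      ≤ 2 * (‖toLp 2 x‖ * (mnorm2 A * ‖toLp 2 y‖)) := by
        gcongr
        exact (abs_im_le_norm _).trans (hCS.trans (by gcongr; exact norm_map_ofReal_mulVec_le A y))
    _ ≤ mnorm2 A * (‖toLp 2 x‖ ^ 2 + ‖toLp 2 y‖ ^ 2) := by
        nlinarith [two_mul_le_add_sq ‖toLp 2 x‖ ‖toLp 2 y‖]

lemma skewBlock_mulVec (A : Matrix ι κ ℝ) (w : ι ⊕ κ → ℂ) :
    skewBlock A *ᵥ w =
      Sum.elim (A.map ofReal *ᵥ (w ∘ Sum.inr)) (-((A.map ofReal)ᵀ *ᵥ (w ∘ Sum.inl))) := by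
  simp [skewBlock, fromBlocks_mulVec, neg_mulVec]

lemma star_dotProduct_skewBlock_mulVec (A : Matrix ι κ ℝ) (w : ι ⊕ κ → ℂ) :
    star w ⬝ᵥ (skewBlock A *ᵥ w) =
      (2 * (star (w ∘ Sum.inl) ⬝ᵥ (A.map ofReal *ᵥ (w ∘ Sum.inr))).im : ℝ) * I := by
  set x := w ∘ Sum.inl
  set y := w ∘ Sum.inr
  have hsplit : star w ⬝ᵥ (skewBlock A *ᵥ w) =
      star x ⬝ᵥ (A.map ofReal *ᵥ y) - star y ⬝ᵥ ((A.map ofReal)ᵀ *ᵥ x) := by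
    simp [skewBlock_mulVec, dotProduct, Fintype.sum_sum_type, x, y, sub_eq_add_neg]
  have hadj : star y ⬝ᵥ ((A.map ofReal)ᵀ *ᵥ x) = conj (star x ⬝ᵥ (A.map ofReal *ᵥ y)) := by
    simp only [dotProduct, mulVec, Pi.star_apply, RCLike.star_def, transpose_apply, map_apply,
      Finset.mul_sum, map_sum, map_mul, conj_conj, conj_ofReal]
    rw [Finset.sum_comm]
    exact Finset.sum_congr rfl fun _ _ => Finset.sum_congr rfl fun _ _ => by ring
  rw [hsplit, hadj, sub_conj]

end Complexification

section OGDA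

variable {n m : ℕ} {η : ℝ}

lemma map_ofReal_MOGDA (A : Matrix (Fin n) (Fin m) ℝ) :
    (MOGDA η A A).map ofReal =
      fromBlocks (1 - (2 * η : ℂ) • skewBlock A) ((η : ℂ) • skewBlock A) 1 0 := by
  ext (((i | i) | (i | i))) (((j | j) | (j | j))) <;>
    simp [MOGDA, skewBlock, one_apply, apply_ite ofReal]

lemma exists_skewBlock_mulVec_eq_of_isEig {A : Matrix (Fin n) (Fin m) ℝ} {μ : ℂ}
    (hμ : IsEig (MOGDA η A A) μ) :
    ∃ w, w ≠ 0 ∧ (η * (1 - 2 * μ)) • (skewBlock A *ᵥ w) = (μ ^ 2 - μ) • w := by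
  obtain ⟨v, hv, hMv⟩ := hμ
  rw [map_ofReal_MOGDA] at hMv
  exact exists_mulVec_eq_of_fromBlocks_mulVec_eq _ _ _ v hv hMv

lemma exists_abs_le_mnorm2_of_isEig {A : Matrix (Fin n) (Fin m) ℝ} {μ : ℂ}
    (hμ : IsEig (MOGDA η A A) μ) :
    ∃ c : ℝ, |c| ≤ mnorm2 A ∧ μ ^ 2 - μ = (η * c : ℝ) * I * (1 - 2 * μ) := by
  obtain ⟨w, hw, hJw⟩ := exists_skewBlock_mulVec_eq_of_isEig hμ
  have hdot := congrArg (star w ⬝ᵥ ·) hJw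
  simp only [dotProduct_smul, star_dotProduct_skewBlock_mulVec, star_dotProduct_self_eq_norm_sq,
    smul_eq_mul] at hdot
  have hN : 0 < ‖toLp 2 w‖ ^ 2 := by
    have : toLp 2 w ≠ 0 := by simpa using hw
    positivity
  rw [norm_sq_toLp_sumElim] at hdot hN
  set N := ‖toLp 2 (w ∘ Sum.inl)‖ ^ 2 + ‖toLp 2 (w ∘ Sum.inr)‖ ^ 2
  set p := star (w ∘ Sum.inl) ⬝ᵥ (A.map ofReal *ᵥ (w ∘ Sum.inr))
  refine ⟨2 * p.im / N, ?_, ?_⟩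
  · rw [abs_div, abs_of_pos hN, div_le_iff₀ hN, abs_mul, abs_two]
    exact two_mul_abs_im_star_dotProduct_mulVec_le A _ _
  · have hN' : (N : ℂ) ≠ 0 := by exact_mod_cast hN.ne'
    push_cast at hdot ⊢
    field_simp
    linear_combination -hdot

lemma norm_lt_one_of_isEig (hη : 0 < η) {A : Matrix (Fin n) (Fin m) ℝ} (hσ : 0 < mnorm2 A)
    (hησ : η < 1 / (2 * mnorm2 A)) {μ : ℂ} (hμ : IsEig (MOGDA η A A) μ) (hμ1 : μ ≠ 1) :
    ‖μ‖ < 1 := by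
  obtain ⟨c, hc, hrel⟩ := exists_abs_le_mnorm2_of_isEig hμ
  refine norm_lt_one_of_sq_sub_self_eq ?_ hμ1 hrel
  have hηc : η * |c| < 1 / 2 := by
    rw [lt_div_iff₀ (by positivity)] at hησ
    nlinarith
  rw [← sq_abs, abs_mul, abs_of_pos hη]
  nlinarith [mul_nonneg hη.le (abs_nonneg c)]

lemma not_isEig_one_of_isUnit_det (hη : η ≠ 0) {A : Matrix (Fin n) (Fin n) ℝ}
    (hA : IsUnit A.det) : ¬ IsEig (MOGDA η A A) 1 := by
  intro h1
  obtain ⟨w, hw, hJw⟩ := exists_skewBlock_mulVec_eq_of_isEig h1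
  have hJ : skewBlock A *ᵥ w = 0 := by
    simpa [hη, show (1 : ℂ) - 2 ≠ 0 by norm_num] using hJw
  have hAc : IsUnit (A.map ofReal) := by
    rw [isUnit_iff_isUnit_det]
    exact (RingHom.map_det ofRealHom A).symm ▸ hA.map ofRealHom
  rw [skewBlock_mulVec, ← Sum.elim_zero_zero, Sum.elim_eq_iff, neg_eq_zero] at hJ
  apply hw
  rw [← Sum.elim_comp_inl_inr w, ← Sum.elim_zero_zero, Sum.elim_eq_iff]
  exact ⟨mulVec_injective_of_isUnit ((isUnit_transpose _).mpr hAc)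
      (hJ.2.trans (mulVec_zero _).symm),
    mulVec_injective_of_isUnit hAc (hJ.1.trans (mulVec_zero _).symm)⟩

lemma MOGDA_mulVec_sumElim_self {A : Matrix (Fin n) (Fin m) ℝ} {x : Fin n → ℝ} {y : Fin m → ℝ}
    (hy : A *ᵥ y = 0) (hx : Aᵀ *ᵥ x = 0) :
    MOGDA η A A *ᵥ Sum.elim (Sum.elim x y) (Sum.elim x y) =
      Sum.elim (Sum.elim x y) (Sum.elim x y) := by
  simp [MOGDA, fromBlocks_mulVec, smul_mulVec, neg_mulVec, hx, hy]

lemma isEig_one_of_mulVec_eq_zero {A : Matrix (Fin n) (Fin m) ℝ} {x : Fin n → ℝ} {y : Fin m → ℝ}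
    (hxy : x ≠ 0 ∨ y ≠ 0) (hy : A *ᵥ y = 0) (hx : Aᵀ *ᵥ x = 0) : IsEig (MOGDA η A A) 1 := by
  simpa using isEig_of_mulVec_eq_smul (r := 1)
    (sumElim_ne_zero_iff.mpr (.inl (sumElim_ne_zero_iff.mpr hxy)))
    (by simpa using MOGDA_mulVec_sumElim_self (η := η) hy hx)

lemma isEig_one_MOGDA {A : Matrix (Fin n) (Fin m) ℝ}
    (h : (∃ y : Fin m → ℝ, y ≠ 0 ∧ A *ᵥ y = 0) ∨ (∃ x : Fin n → ℝ, x ≠ 0 ∧ Aᵀ *ᵥ x = 0)) :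
    IsEig (MOGDA η A A) 1 := by
  rcases h with ⟨y, hy0, hy⟩ | ⟨x, hx0, hx⟩
  · exact isEig_one_of_mulVec_eq_zero (x := 0) (.inr hy0) hy (mulVec_zero _)
  · exact isEig_one_of_mulVec_eq_zero (y := 0) (.inl hx0) (mulVec_zero _) hx

end OGDA

/-- With OGDA step size `η < 1/(2σ)`, `σ = ‖A‖₂ > 0` the largest singular value, and
`M = M_OGDA(A, A)` the time-independent OGDA iterative matrix:
(i) if `A` is an invertible square matrix, every complex eigenvalue of `M` has modulus `< 1`;
(ii) if `A` has a zero singular value (i.e. `A` or `Aᵀ` has a nontrivial kernel, which is the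
case whenever `A` is not an invertible square matrix), then `1` is an eigenvalue of `M` and
all other eigenvalues have modulus `< 1`. -/
theorem stmt8 (η : ℝ) (hη : 0 < η) :
    (∀ (n : ℕ) (A : Matrix (Fin n) (Fin n) ℝ), 0 < mnorm2 A →
      η < 1 / (2 * mnorm2 A) → IsUnit A.det →
      ∀ μ : ℂ, IsEig (MOGDA η A A) μ → ‖μ‖ < 1) ∧
    (∀ (n m : ℕ) (A : Matrix (Fin n) (Fin m) ℝ), 0 < mnorm2 A →
      η < 1 / (2 * mnorm2 A) →
      ((∃ y : Fin m → ℝ, y ≠ 0 ∧ A.mulVec y = 0) ∨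
        (∃ x : Fin n → ℝ, x ≠ 0 ∧ Aᵀ.mulVec x = 0)) →
      IsEig (MOGDA η A A) 1 ∧
        ∀ μ : ℂ, IsEig (MOGDA η A A) μ → μ ≠ 1 → ‖μ‖ < 1) := by
  refine ⟨fun n A hσ hησ hA μ hμ => ?_, fun n m A hσ hησ hker => ⟨isEig_one_MOGDA hker, ?_⟩⟩
  · refine norm_lt_one_of_isEig hη hσ hησ hμ ?_
    rintro rfl
    exact not_isEig_one_of_isUnit_det hη.ne' hA hμ
  · exact fun μ hμ hμ1 => norm_lt_one_of_isEig hη hσ hησ hμ hμ1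
end

section
/- For every payoff matrix A ∈ ℝ^{n×m} and all step sizes α, γ > 0, the EG iterative matrix M_EG(A) is a normal matrix, i.e., M_EG(A)·M_EG(A)ᵀ = M_EG(A)ᵀ·M_EG(A); indeed both products equal the block-diagonal matrix diag( (Iₙ − αγ A Aᵀ)² + α² A Aᵀ , (Iₘ − αγ Aᵀ A)² + α² Aᵀ A ). -/
open Matrix

lemma hBA {n m : ℕ} (c : ℝ) (A : Matrix (Fin n) (Fin m) ℝ) :
    (1 - c • (A * Aᵀ)) * A = A * (1 - c • (Aᵀ * A)) := by
  rw [Matrix.sub_mul, Matrix.mul_sub, Matrix.one_mul, Matrix.mul_one,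
    Matrix.smul_mul, Matrix.mul_smul, Matrix.mul_assoc]

lemma hBAT {n m : ℕ} (c : ℝ) (A : Matrix (Fin n) (Fin m) ℝ) :
    (1 - c • (Aᵀ * A)) * Aᵀ = Aᵀ * (1 - c • (A * Aᵀ)) := by
  rw [Matrix.sub_mul, Matrix.mul_sub, Matrix.one_mul, Matrix.mul_one,
    Matrix.smul_mul, Matrix.mul_smul, Matrix.mul_assoc]

/-- For every payoff matrix `A` and step sizes `α, γ > 0`, the EG iterative matrix is normal:
`M_EG(A)·M_EG(A)ᵀ = M_EG(A)ᵀ·M_EG(A)`, and both products equal the block-diagonal matrix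
`diag((I − αγ A Aᵀ)² + α² A Aᵀ, (I − αγ Aᵀ A)² + α² Aᵀ A)`. -/
theorem stmt9 {n m : ℕ} (α γ : ℝ) (hα : 0 < α) (hγ : 0 < γ)
    (A : Matrix (Fin n) (Fin m) ℝ) :
    MEG α γ A * (MEG α γ A)ᵀ = (MEG α γ A)ᵀ * MEG α γ A ∧
    MEG α γ A * (MEG α γ A)ᵀ =
      fromBlocks ((1 - (α * γ) • (A * Aᵀ)) ^ 2 + (α ^ 2) • (A * Aᵀ)) 0 0
        ((1 - (α * γ) • (Aᵀ * A)) ^ 2 + (α ^ 2) • (Aᵀ * A)) := by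
  set c := α * γ with hc
  set B := 1 - c • (A * Aᵀ) with hB
  set E := 1 - c • (Aᵀ * A) with hE
  have hBt : Bᵀ = B := by
    rw [hB]; simp [transpose_sub, transpose_smul, transpose_mul]
  have hEt : Eᵀ = E := by
    rw [hE]; simp [transpose_sub, transpose_smul, transpose_mul]
  have e11' : B * B + (-α) • A * ((-α) • Aᵀ) = B ^ 2 + α ^ 2 • (A * Aᵀ) := by
    rw [sq, Matrix.smul_mul, Matrix.mul_smul, smul_smul, neg_mul_neg, ← sq]
    simp [sq]
  have e11'' : B * B + α • A * (α • Aᵀ) = B ^ 2 + α ^ 2 • (A * Aᵀ) := by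
    rw [sq, Matrix.smul_mul, Matrix.mul_smul, smul_smul, ← sq]
    simp [sq]
  have e22' : (-α) • Aᵀ * ((-α) • A) + E * E = E ^ 2 + α ^ 2 • (Aᵀ * A) := by
    rw [sq, add_comm, Matrix.smul_mul, Matrix.mul_smul, smul_smul, neg_mul_neg, ← sq]
    simp [sq]
  have e22'' : α • Aᵀ * (α • A) + E * E = E ^ 2 + α ^ 2 • (Aᵀ * A) := by
    rw [sq, add_comm, Matrix.smul_mul, Matrix.mul_smul, smul_smul, ← sq]
    simp [sq]
  have e12 : B * (α • A) + (-α) • A * E = 0 := by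
    rw [Matrix.mul_smul, Matrix.smul_mul, hBA, neg_smul, add_neg_cancel]
  have e12' : B * ((-α) • A) + α • A * E = 0 := by
    rw [Matrix.mul_smul, Matrix.smul_mul, hBA, neg_smul, neg_add_cancel]
  have e21 : α • Aᵀ * B + E * ((-α) • Aᵀ) = 0 := by
    rw [Matrix.smul_mul, Matrix.mul_smul, hBAT, neg_smul, add_neg_cancel]
  have e21' : (-α) • Aᵀ * B + E * (α • Aᵀ) = 0 := by
    rw [Matrix.smul_mul, Matrix.mul_smul, hBAT, neg_smul, neg_add_cancel]
  have h2 : MEG α γ A * (MEG α γ A)ᵀ =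
      fromBlocks (B ^ 2 + (α ^ 2) • (A * Aᵀ)) 0 0 (E ^ 2 + (α ^ 2) • (Aᵀ * A)) := by
    simp only [MEG, fromBlocks_transpose, transpose_sub, transpose_one, transpose_smul,
      transpose_mul, transpose_transpose, fromBlocks_multiply, ← hB, ← hE, hBt, hEt]
    rw [e11', e12, e21, e22'']
  have h3 : (MEG α γ A)ᵀ * MEG α γ A =
      fromBlocks (B ^ 2 + (α ^ 2) • (A * Aᵀ)) 0 0 (E ^ 2 + (α ^ 2) • (Aᵀ * A)) := by
    simp only [MEG, fromBlocks_transpose, transpose_sub, transpose_one, transpose_smul,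
      transpose_mul, transpose_transpose, fromBlocks_multiply, ← hB, ← hE, hBt, hEt]
    rw [e11'', e12', e21', e22']
  exact ⟨h2.trans h3.symm, h2⟩
end

section
/- Let D ∈ ℂ^{d×d} be a diagonal matrix each of whose diagonal entries has modulus at most 1, and let δ ∈ (0,1) be such that every diagonal entry of D that is not equal to 1 has modulus at most δ. Let {B_t} ⊂ ℂ^{d×d} satisfy Σ_{t=0}^∞ ‖B_t‖₂ < ∞, and define X_{t+1} = (D + B_t) X_t for a given X_0 ∈ ℂ^d. Then there exists a constant C > 0 such that for all t ≥ 0, ‖(D − I) X_t‖₂ ≤ C · max{ δ^{t/2}, Σ_{l ≥ ⌊t/2⌋} ‖B_l‖₂ }. In particular ‖(D − I) X_t‖₂ → 0 as t → ∞. -/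
/-!
Write `w_t := (D - I) X_t`. Since `D` commutes with `D - I`,
`w_{t+1} = D w_t + (D - I) B_t X_t`, and `w_t` vanishes in the coordinates where `D_ii = 1`,
so `‖D w_t‖ ≤ δ ‖w_t‖`. A discrete Grönwall argument on `‖X_{t+1}‖ ≤ (1 + ‖B_t‖) ‖X_t‖` bounds
`‖X_t‖` by `K := ‖X_0‖ exp (Σ ‖B_t‖)`, hence `‖w_{t+1}‖ ≤ δ ‖w_t‖ + 2K ‖B_t‖`. Unrolling this
recursion from `⌊t/2⌋` to `t` gives `‖w_t‖ ≤ 2K (δ^{t/2} + Σ_{l ≥ ⌊t/2⌋} ‖B_l‖)`.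
-/

open Matrix Filter

/-- Euclidean norm of a complex vector. -/
noncomputable def cvnorm2 {ι : Type*} [Fintype ι] (v : ι → ℂ) : ℝ :=
  Real.sqrt (∑ i, ‖v i‖ ^ 2)

/-- Spectral (operator 2-)norm of a complex matrix. -/
noncomputable def cmnorm2 {ι κ : Type*} [Fintype ι] [Fintype κ] [DecidableEq κ]
    (M : Matrix ι κ ℂ) : ℝ :=
  ‖LinearMap.toContinuousLinearMap (Matrix.toEuclideanLin M)‖

section Norms

variable {ι κ : Type*} [Fintype ι] [Fintype κ]

lemma cvnorm2_eq_norm_toLp (v : ι → ℂ) : cvnorm2 v = ‖WithLp.toLp 2 v‖ := by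
  simp [EuclideanSpace.norm_eq, cvnorm2]

lemma cvnorm2_nonneg (v : ι → ℂ) : 0 ≤ cvnorm2 v := Real.sqrt_nonneg _

lemma cvnorm2_add_le (u v : ι → ℂ) : cvnorm2 (u + v) ≤ cvnorm2 u + cvnorm2 v := by
  simpa only [cvnorm2_eq_norm_toLp, WithLp.toLp_add] using norm_add_le _ _

lemma cmnorm2_nonneg [DecidableEq κ] (M : Matrix ι κ ℂ) : 0 ≤ cmnorm2 M := norm_nonneg _

lemma cvnorm2_mulVec_le [DecidableEq κ] (M : Matrix ι κ ℂ) (v : κ → ℂ) :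
    cvnorm2 (M *ᵥ v) ≤ cmnorm2 M * cvnorm2 v := by
  simpa [cvnorm2_eq_norm_toLp, cmnorm2, Matrix.toLin'_apply] using
    (LinearMap.toContinuousLinearMap (Matrix.toEuclideanLin M)).le_opNorm (WithLp.toLp 2 v)

lemma Matrix.IsDiag.mulVec_apply [DecidableEq ι] {M : Matrix ι ι ℂ} (hM : M.IsDiag)
    (v : ι → ℂ) (i : ι) : (M *ᵥ v) i = M i i * v i := by
  conv_lhs => rw [← (isDiag_iff_diagonal_diag M).mp hM]
  rw [mulVec_diagonal, diag_apply]

lemma Matrix.IsDiag.cvnorm2_mulVec_le [DecidableEq ι] {M : Matrix ι ι ℂ} (hM : M.IsDiag)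
    {v : ι → ℂ} {c : ℝ} (hc : 0 ≤ c) (hv : ∀ i, v i ≠ 0 → ‖M i i‖ ≤ c) :
    cvnorm2 (M *ᵥ v) ≤ c * cvnorm2 v := by
  rw [cvnorm2, cvnorm2, ← Real.sqrt_sq hc, ← Real.sqrt_mul (sq_nonneg c), Finset.mul_sum]
  refine Real.sqrt_le_sqrt (Finset.sum_le_sum fun i _ => ?_)
  rw [hM.mulVec_apply, norm_mul, mul_pow]
  by_cases hvi : v i = 0
  · simp [hvi]
  · gcongr
    exact hv i hvi

end Norms

lemma le_mul_exp_sum_range_of_le_one_add_mul {z b : ℕ → ℝ} (hb : ∀ t, 0 ≤ b t) (hz0 : 0 ≤ z 0)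
    (hz : ∀ t, z (t + 1) ≤ (1 + b t) * z t) (t : ℕ) :
    z t ≤ z 0 * Real.exp (∑ k ∈ Finset.range t, b k) := by
  induction t with
  | zero => simp
  | succ t ih =>
    calc z (t + 1) ≤ (1 + b t) * z t := hz t
      _ ≤ (1 + b t) * (z 0 * Real.exp (∑ k ∈ Finset.range t, b k)) :=
        mul_le_mul_of_nonneg_left ih (by linarith [hb t])
      _ ≤ Real.exp (b t) * (z 0 * Real.exp (∑ k ∈ Finset.range t, b k)) := by
        gcongr
        linarith [Real.add_one_le_exp (b t)]
      _ = z 0 * Real.exp (∑ k ∈ Finset.range (t + 1), b k) := by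
        rw [Finset.sum_range_succ, Real.exp_add]; ring

lemma le_mul_exp_tsum_of_le_one_add_mul {z b : ℕ → ℝ} (hb : ∀ t, 0 ≤ b t) (hbs : Summable b)
    (hz0 : 0 ≤ z 0) (hz : ∀ t, z (t + 1) ≤ (1 + b t) * z t) (t : ℕ) :
    z t ≤ z 0 * Real.exp (∑' k, b k) :=
  (le_mul_exp_sum_range_of_le_one_add_mul hb hz0 hz t).trans <| by
    gcongr
    exact hbs.sum_le_tsum _ fun k _ => hb k

lemma le_pow_mul_add_sum_of_le_mul_add {z c : ℕ → ℝ} {a : ℝ} (ha₀ : 0 ≤ a) (ha₁ : a ≤ 1)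
    (hc : ∀ t, 0 ≤ c t) (hz : ∀ t, z (t + 1) ≤ a * z t + c t) (s n : ℕ) :
    z (s + n) ≤ a ^ n * z s + ∑ k ∈ Finset.range n, c (s + k) := by
  induction n with
  | zero => simp
  | succ n ih =>
    have hsum : 0 ≤ ∑ k ∈ Finset.range n, c (s + k) := Finset.sum_nonneg fun k _ => hc _
    calc z (s + (n + 1)) ≤ a * z (s + n) + c (s + n) := hz (s + n)
      _ ≤ a * (a ^ n * z s + ∑ k ∈ Finset.range n, c (s + k)) + c (s + n) := by gcongr
      _ ≤ a ^ (n + 1) * z s + ∑ k ∈ Finset.range (n + 1), c (s + k) := by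
        rw [Finset.sum_range_succ, pow_succ]
        nlinarith [mul_le_of_le_one_left hsum ha₁]

lemma le_pow_mul_add_tsum_of_le_mul_add {z c : ℕ → ℝ} {a : ℝ} (ha₀ : 0 ≤ a) (ha₁ : a ≤ 1)
    (hc : ∀ t, 0 ≤ c t) (hcs : Summable c) (hz : ∀ t, z (t + 1) ≤ a * z t + c t) (s n : ℕ) :
    z (s + n) ≤ a ^ n * z s + ∑' k, c (s + k) :=
  (le_pow_mul_add_sum_of_le_mul_add ha₀ ha₁ hc hz s n).trans <| by
    gcongr
    exact (hcs.comp_injective (add_right_injective s)).sum_le_tsum _ fun k _ => hc _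

lemma pow_sub_div_two_le_rpow_div_two {δ : ℝ} (hδ₀ : 0 < δ) (hδ₁ : δ ≤ 1) (t : ℕ) :
    δ ^ (t - t / 2) ≤ δ ^ ((t : ℝ) / 2) := by
  rw [← Real.rpow_natCast]
  refine Real.rpow_le_rpow_of_exponent_ge hδ₀ hδ₁ ?_
  have : ((t / 2 : ℕ) : ℝ) ≤ (t : ℝ) / 2 := Nat.cast_div_le
  push_cast [Nat.div_le_self]
  linarith

lemma tendsto_rpow_div_two_atTop {δ : ℝ} (hδ₀ : 0 ≤ δ) (hδ₁ : δ < 1) :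
    Tendsto (fun t : ℕ => δ ^ ((t : ℝ) / 2)) atTop (nhds 0) := by
  have h := tendsto_pow_atTop_nhds_zero_of_lt_one (Real.rpow_nonneg hδ₀ (1 / 2))
    (Real.rpow_lt_one hδ₀ hδ₁ one_half_pos)
  refine h.congr fun t => ?_
  rw [← Real.rpow_natCast, ← Real.rpow_mul hδ₀]
  ring_nf

lemma tendsto_tsum_div_two_add_atTop (b : ℕ → ℝ) :
    Tendsto (fun t : ℕ => ∑' l, b (t / 2 + l)) atTop (nhds 0) := by
  have h := (tendsto_sum_nat_add b).comp (Nat.tendsto_div_const_atTop two_ne_zero)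
  simpa only [Function.comp_def, add_comm] using h

lemma sub_one_mulVec_add_mulVec {ι : Type*} [Fintype ι] [DecidableEq ι] (D B : Matrix ι ι ℂ)
    (x : ι → ℂ) : (D - 1) *ᵥ ((D + B) *ᵥ x) = D *ᵥ ((D - 1) *ᵥ x) + (D - 1) *ᵥ (B *ᵥ x) := by
  simp only [mulVec_mulVec, ← add_mulVec]
  congr 1
  noncomm_ring

section DiagonalSystem

variable {ι : Type*} [Fintype ι] [DecidableEq ι] {D : Matrix ι ι ℂ}

lemma cvnorm2_sub_one_mulVec_le (hdiag : D.IsDiag) (hmod : ∀ i, ‖D i i‖ ≤ 1) (v : ι → ℂ) :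
    cvnorm2 ((D - 1) *ᵥ v) ≤ 2 * cvnorm2 v :=
  (hdiag.sub isDiag_one).cvnorm2_mulVec_le zero_le_two fun i _ => by
    simpa using (norm_sub_le (D i i) 1).trans (by rw [norm_one]; linarith [hmod i])

variable {B : ℕ → Matrix ι ι ℂ} {X : ℕ → ι → ℂ}

lemma cvnorm2_le_mul_exp_tsum (hdiag : D.IsDiag) (hmod : ∀ i, ‖D i i‖ ≤ 1)
    (hB : Summable fun t => cmnorm2 (B t)) (hX : ∀ t, X (t + 1) = (D + B t) *ᵥ X t) (t : ℕ) :
    cvnorm2 (X t) ≤ cvnorm2 (X 0) * Real.exp (∑' k, cmnorm2 (B k)) := by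
  refine le_mul_exp_tsum_of_le_one_add_mul (z := fun t => cvnorm2 (X t))
    (fun t => cmnorm2_nonneg _) hB (cvnorm2_nonneg _) (fun t => ?_) t
  rw [hX, add_mulVec]
  calc cvnorm2 (D *ᵥ X t + B t *ᵥ X t) ≤ cvnorm2 (D *ᵥ X t) + cvnorm2 (B t *ᵥ X t) :=
        cvnorm2_add_le _ _
    _ ≤ 1 * cvnorm2 (X t) + cmnorm2 (B t) * cvnorm2 (X t) :=
        add_le_add (hdiag.cvnorm2_mulVec_le zero_le_one fun i _ => hmod i)
          (cvnorm2_mulVec_le _ _)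
    _ = (1 + cmnorm2 (B t)) * cvnorm2 (X t) := by ring

lemma cvnorm2_sub_one_mulVec_succ_le (hdiag : D.IsDiag) (hmod : ∀ i, ‖D i i‖ ≤ 1) {δ : ℝ}
    (hδ : 0 ≤ δ) (hgap : ∀ i, D i i ≠ 1 → ‖D i i‖ ≤ δ) (hX : ∀ t, X (t + 1) = (D + B t) *ᵥ X t)
    (t : ℕ) : cvnorm2 ((D - 1) *ᵥ X (t + 1)) ≤
      δ * cvnorm2 ((D - 1) *ᵥ X t) + 2 * (cmnorm2 (B t) * cvnorm2 (X t)) := by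
  rw [hX, sub_one_mulVec_add_mulVec]
  refine (cvnorm2_add_le _ _).trans (add_le_add ?_ ?_)
  · refine hdiag.cvnorm2_mulVec_le hδ fun i hi => hgap i fun h => hi ?_
    simp [(hdiag.sub isDiag_one).mulVec_apply, h]
  · exact (cvnorm2_sub_one_mulVec_le hdiag hmod _).trans (by gcongr; exact cvnorm2_mulVec_le _ _)

lemma cvnorm2_sub_one_mulVec_le_rpow_add_tsum (hdiag : D.IsDiag) (hmod : ∀ i, ‖D i i‖ ≤ 1)
    {δ : ℝ} (hδ₀ : 0 < δ) (hδ₁ : δ ≤ 1) (hgap : ∀ i, D i i ≠ 1 → ‖D i i‖ ≤ δ)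
    (hB : Summable fun t => cmnorm2 (B t)) (hX : ∀ t, X (t + 1) = (D + B t) *ᵥ X t) (t : ℕ) :
    cvnorm2 ((D - 1) *ᵥ X t) ≤ 2 * (cvnorm2 (X 0) * Real.exp (∑' k, cmnorm2 (B k))) *
      (δ ^ ((t : ℝ) / 2) + ∑' l, cmnorm2 (B (t / 2 + l))) := by
  set K := cvnorm2 (X 0) * Real.exp (∑' k, cmnorm2 (B k))
  have hK : 0 ≤ K := mul_nonneg (cvnorm2_nonneg _) (Real.exp_pos _).le
  have hXK := cvnorm2_le_mul_exp_tsum hdiag hmod hB hX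
  have hrec (t : ℕ) : cvnorm2 ((D - 1) *ᵥ X (t + 1)) ≤
      δ * cvnorm2 ((D - 1) *ᵥ X t) + 2 * K * cmnorm2 (B t) := by
    refine (cvnorm2_sub_one_mulVec_succ_le hdiag hmod hδ₀.le hgap hX t).trans ?_
    nlinarith [hXK t, cmnorm2_nonneg (B t)]
  have h := le_pow_mul_add_tsum_of_le_mul_add (z := fun t => cvnorm2 ((D - 1) *ᵥ X t))
    hδ₀.le hδ₁ (fun t => mul_nonneg (by positivity) (cmnorm2_nonneg (B t)))
    (hB.mul_left (2 * K)) hrec (t / 2) (t - t / 2)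
  rw [Nat.add_sub_cancel' (Nat.div_le_self t 2), tsum_mul_left] at h
  have hstart := (cvnorm2_sub_one_mulVec_le hdiag hmod (X (t / 2))).trans
    (mul_le_mul_of_nonneg_left (hXK (t / 2)) zero_le_two)
  calc _ ≤ δ ^ (t - t / 2) * cvnorm2 ((D - 1) *ᵥ X (t / 2))
        + 2 * K * ∑' l, cmnorm2 (B (t / 2 + l)) := h
    _ ≤ δ ^ ((t : ℝ) / 2) * (2 * K) + 2 * K * ∑' l, cmnorm2 (B (t / 2 + l)) := by
      gcongr ?_ + _
      exact mul_le_mul (pow_sub_div_two_le_rpow_div_two hδ₀ hδ₁ t) hstart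
        (cvnorm2_nonneg _) (Real.rpow_nonneg hδ₀.le _)
    _ = _ := by ring

end DiagonalSystem

/-- Let `D` be a complex diagonal matrix with all diagonal entries of modulus `≤ 1` and with
every diagonal entry `≠ 1` of modulus `≤ δ` for some `δ ∈ (0,1)`. If `Σ_t ‖B_t‖₂ < ∞` and
`X_{t+1} = (D + B_t) X_t`, then there is `C > 0` with
`‖(D − I) X_t‖₂ ≤ C·max{δ^{t/2}, Σ_{l ≥ ⌊t/2⌋} ‖B_l‖₂}` for all `t`;
in particular `‖(D − I) X_t‖₂ → 0`. -/
theorem stmt18 {d : ℕ} (D : Matrix (Fin d) (Fin d) ℂ) (hdiag : D.IsDiag)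
    (hmod : ∀ i, ‖D i i‖ ≤ 1)
    (δ : ℝ) (hδ : δ ∈ Set.Ioo (0 : ℝ) 1)
    (hgap : ∀ i, D i i ≠ 1 → ‖D i i‖ ≤ δ)
    (B : ℕ → Matrix (Fin d) (Fin d) ℂ) (hB : Summable fun t => cmnorm2 (B t))
    (X : ℕ → (Fin d → ℂ))
    (hX : ∀ t, X (t + 1) = (D + B t).mulVec (X t)) :
    ∃ C > (0 : ℝ),
      (∀ t : ℕ, cvnorm2 ((D - 1).mulVec (X t)) ≤
          C * max (δ ^ ((t : ℝ) / 2)) (∑' l : ℕ, cmnorm2 (B (t / 2 + l)))) ∧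
      Tendsto (fun t => cvnorm2 ((D - 1).mulVec (X t))) atTop (nhds 0) := by
  obtain ⟨hδ₀, hδ₁⟩ := hδ
  set K := cvnorm2 (X 0) * Real.exp (∑' k, cmnorm2 (B k))
  have hK : 0 ≤ K := mul_nonneg (cvnorm2_nonneg _) (Real.exp_pos _).le
  have hbound := cvnorm2_sub_one_mulVec_le_rpow_add_tsum hdiag hmod hδ₀ hδ₁.le hgap hB hX
  refine ⟨4 * K + 1, by positivity, fun t => (hbound t).trans ?_, ?_⟩
  · nlinarith [le_max_left (δ ^ ((t : ℝ) / 2)) (∑' l, cmnorm2 (B (t / 2 + l))),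
      le_max_right (δ ^ ((t : ℝ) / 2)) (∑' l, cmnorm2 (B (t / 2 + l))),
      Real.rpow_nonneg hδ₀.le ((t : ℝ) / 2)]
  · refine squeeze_zero (fun t => cvnorm2_nonneg _) hbound ?_
    simpa using ((tendsto_rpow_div_two_atTop hδ₀.le hδ₁).add
      (tendsto_tsum_div_two_add_atTop fun t => cmnorm2 (B t))).const_mul (2 * K)
end
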